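/- arXiv:2506.09635 — 5 statements merged into one kernel-verified Lean document; each statement's English description precedes it below -/
import Mathlib

section
/- For every m ∈ ℕ, every ν > 0, every δ ∈ (0, π/2), all t ∈ ℝ and all r₁, r₂ > 0, the following identity holds: (1/π) ∫_0^π W(t, 𝐦_s) χ_δ(π-s) cos(νs) ds − (sin(νπ)/π) ∫_0^∞ W(t, 𝐧_s) χ_δ(s) e^{-sν} ds = ((-1)^m/π) ∫_0^π (∂/∂s)^{2m}[ W(t, 𝐦_s) χ_δ(π-s) ] · cos(νs)/ν^{2m} ds − (sin(νπ)/π) ∫_0^∞ (∂/∂s)^{2m}[ W(t, 𝐧_s) χ_δ(s) ] · e^{-sν}/ν^{2m} ds. -/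
open MeasureTheory

/-- `W(t,v) = ∫_{ℝ²} φ(|ξ|) e^{i(t|ξ| − v·ξ)} dξ`. -/
noncomputable def Wfun (φ : ℝ → ℝ) (t : ℝ) (v : EuclideanSpace ℝ (Fin 2)) : ℂ :=
  ∫ ξ : EuclideanSpace ℝ (Fin 2),
    (φ ‖ξ‖ : ℂ) * Complex.exp (Complex.I * ((t * ‖ξ‖ - @inner ℝ _ _ v ξ : ℝ) : ℂ))

/-- `𝐦_s = (r₁−r₂, √(2(1−cos s) r₁ r₂))`. -/
noncomputable def mVec (r₁ r₂ s : ℝ) : EuclideanSpace ℝ (Fin 2) :=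
  (WithLp.equiv 2 (Fin 2 → ℝ)).symm ![r₁ - r₂, Real.sqrt (2 * (1 - Real.cos s) * r₁ * r₂)]

/-- `𝐧_s = (r₁+r₂, √(2(cosh s−1) r₁ r₂))`. -/
noncomputable def nVec (r₁ r₂ s : ℝ) : EuclideanSpace ℝ (Fin 2) :=
  (WithLp.equiv 2 (Fin 2 → ℝ)).symm ![r₁ + r₂, Real.sqrt (2 * (Real.cosh s - 1) * r₁ * r₂)]

namespace IBPAux
open Complex


open Complex

noncomputable def Phi (φ : ℝ → ℝ) (t b : ℝ) (z : ℂ) : ℂ :=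
  ∫ ξ : EuclideanSpace ℝ (Fin 2),
    (φ ‖ξ‖ : ℂ) * Complex.exp (Complex.I * ((t * ‖ξ‖ - b * ξ 0 : ℝ) : ℂ)) *
      Complex.exp (-(Complex.I * (ξ 1 : ℂ)) * z)

lemma Wfun_eq_Phi (φ : ℝ → ℝ) (t b y : ℝ) :
    Wfun φ t ((WithLp.equiv 2 (Fin 2 → ℝ)).symm ![b, y]) = Phi φ t b (y : ℂ) := by
  unfold Wfun Phi
  congr 1; funext ξ
  have hinner : (@inner ℝ _ _ ((WithLp.equiv 2 (Fin 2 → ℝ)).symm ![b, y]) ξ : ℝ)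
      = b * ξ 0 + y * ξ 1 := by
    simp [PiLp.inner_apply, Fin.sum_univ_two, RCLike.inner_apply]
    ring
  rw [mul_assoc, ← Complex.exp_add, hinner]
  push_cast
  ring_nf

lemma Wfun_radial (φ : ℝ → ℝ) (t : ℝ) (v w : EuclideanSpace ℝ (Fin 2)) (h : ‖v‖ = ‖w‖) :
    Wfun φ t v = Wfun φ t w := by
  rcases eq_or_ne w 0 with h0 | h0
  · have : v = 0 := by
      rw [← norm_eq_zero]; rw [h, h0, norm_zero]
    rw [this, h0]
  · set e := Complex.orthonormalBasisOneI.repr with he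
    have hzw : e.symm w ≠ 0 := by
      simp only [ne_eq, EmbeddingLike.map_eq_zero_iff]; exact h0
    have habs : ‖e.symm v / e.symm w‖ = 1 := by
      rw [norm_div]
      have h1 : ‖e.symm v‖ = ‖v‖ := by
        rw [e.symm.norm_map]
      have h2 : ‖e.symm w‖ = ‖w‖ := by
        rw [e.symm.norm_map]
      rw [h1, h2, h, div_self (norm_ne_zero_iff.mpr h0)]
    set c : Circle := ⟨e.symm v / e.symm w,
      show (e.symm v / e.symm w) ∈ Metric.sphere (0:ℂ) 1 from
        mem_sphere_zero_iff_norm.2 habs⟩ with hc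
    set T : EuclideanSpace ℝ (Fin 2) ≃ₗᵢ[ℝ] EuclideanSpace ℝ (Fin 2) :=
      (e.symm.trans (rotation c)).trans e with hT
    have hTw : T w = v := by
      have hrot : (rotation c) (e.symm w) = e.symm v := by
        simp only [rotation_apply, hc]
        exact div_mul_cancel₀ _ hzw
      simp only [hT, LinearIsometryEquiv.trans_apply, hrot,
        LinearIsometryEquiv.apply_symm_apply]
    have hTsv : T.symm v = w := by rw [← hTw]; simp
    have hmp : MeasurePreserving T volume volume := T.measurePreserving
    have hme : MeasurableEmbedding T := T.toHomeomorph.measurableEmbedding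
    unfold Wfun
    rw [← hmp.integral_comp hme]
    congr 1; funext ξ
    have hn : ‖T ξ‖ = ‖ξ‖ := T.norm_map ξ
    have hi : (@inner ℝ _ _ v (T ξ) : ℝ) = @inner ℝ _ _ w ξ := by
      rw [← hTsv]
      rw [show T ξ = T ξ from rfl]
      rw [← T.inner_map_map (T.symm v) ξ]
      simp
    rw [hn, hi]



lemma phi_bound (φ : ℝ → ℝ) (hφc : Continuous φ) (hφsupp : Function.support φ ⊆ Set.Icc 1 2) :
    ∃ C : ℝ, 0 ≤ C ∧ ∀ x, |φ x| ≤ C := by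
  have hcs : HasCompactSupport φ := HasCompactSupport.intro isCompact_Icc
    (fun x hx => by by_contra hne; exact hx (hφsupp hne))
  obtain ⟨C, hC⟩ := hcs.exists_bound_of_continuous hφc
  exact ⟨C, le_trans (abs_nonneg _) (by simpa using hC 0), fun x => by simpa using hC x⟩

lemma coord_abs_le_norm (ξ : EuclideanSpace ℝ (Fin 2)) (i : Fin 2) : |ξ i| ≤ ‖ξ‖ := by
  rw [EuclideanSpace.norm_eq]
  have h1 : |ξ i| = Real.sqrt (|ξ i| ^ 2) := by
    rw [Real.sqrt_sq_eq_abs]; exact (_root_.abs_abs _).symm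
  rw [h1]
  apply Real.sqrt_le_sqrt
  exact Finset.single_le_sum (f := fun j => |ξ j| ^ 2) (fun j _ => sq_nonneg _)
    (Finset.mem_univ i)

lemma cont_coord (i : Fin 2) : Continuous fun ξ : EuclideanSpace ℝ (Fin 2) => ξ i :=
  (EuclideanSpace.proj i).continuous


lemma Phi_differentiable (φ : ℝ → ℝ) (hφc : Continuous φ)
    (hφsupp : Function.support φ ⊆ Set.Icc 1 2) (t b : ℝ) :
    Differentiable ℂ (Phi φ t b) := by
  obtain ⟨C, hC0, hC⟩ := phi_bound φ hφc hφsupp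
  intro z₀
  set A : EuclideanSpace ℝ (Fin 2) → ℂ := fun ξ =>
    (φ ‖ξ‖ : ℂ) * Complex.exp (Complex.I * ((t * ‖ξ‖ - b * ξ 0 : ℝ) : ℂ)) with hA
  set cc : EuclideanSpace ℝ (Fin 2) → ℂ := fun ξ => -(Complex.I * (ξ 1 : ℂ)) with hcc
  set F : ℂ → EuclideanSpace ℝ (Fin 2) → ℂ := fun z ξ => A ξ * Complex.exp (cc ξ * z) with hF
  set F' : ℂ → EuclideanSpace ℝ (Fin 2) → ℂ :=
    fun z ξ => A ξ * (Complex.exp (cc ξ * z) * cc ξ) with hF'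
  have hAc : Continuous A := by
    apply Continuous.mul
    · exact Complex.continuous_ofReal.comp (hφc.comp continuous_norm)
    · exact Complex.continuous_exp.comp (continuous_const.mul
        (Complex.continuous_ofReal.comp ((continuous_const.mul continuous_norm).sub
          (continuous_const.mul (cont_coord 0)))))
  have hccc : Continuous cc :=
    (continuous_const.mul (Complex.continuous_ofReal.comp (cont_coord 1))).neg
  have hmeasF : ∀ z : ℂ, AEStronglyMeasurable (F z) volume := fun z =>
    (hAc.mul (Complex.continuous_exp.comp (hccc.mul continuous_const))).aestronglyMeasurable
  have hmeasF' : AEStronglyMeasurable (F' z₀) volume :=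
    (hAc.mul ((Complex.continuous_exp.comp (hccc.mul continuous_const)).mul
      hccc)).aestronglyMeasurable
  set R : ℝ := |z₀.im| + 1 with hR
  -- pointwise norm computation
  have hnormF : ∀ z ξ, ‖F z ξ‖ = |φ ‖ξ‖| * Real.exp (ξ 1 * z.im) := by
    intro z ξ
    rw [hF]
    simp only [norm_mul, hA, Complex.norm_real, Real.norm_eq_abs, Complex.norm_exp]
    congr 1
    · rw [show (Complex.I * ((t * ‖ξ‖ - b * ξ 0 : ℝ) : ℂ)).re = 0 by
        simp [Complex.mul_re], Real.exp_zero, mul_one]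
    · congr 1
      rw [hcc]
      simp [Complex.mul_re]
      try ring
  have hφzero : ∀ ξ : EuclideanSpace ℝ (Fin 2), ξ ∉ Metric.closedBall (0:EuclideanSpace ℝ (Fin 2)) 2 → φ ‖ξ‖ = 0 := by
    intro ξ hξ
    by_contra hne
    exact hξ (mem_closedBall_zero_iff.2 (hφsupp hne).2)
  set Bnd : EuclideanSpace ℝ (Fin 2) → ℝ :=
    (Metric.closedBall (0 : EuclideanSpace ℝ (Fin 2)) 2).indicator
      (fun _ => C * Real.exp (2 * R) * 2) with hBnd
  have hBint : Integrable Bnd volume := by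
    apply IntegrableOn.integrable_indicator _ measurableSet_closedBall
    exact integrableOn_const measure_closedBall_lt_top.ne
  have hbase : ∀ (z : ℂ), |z.im| ≤ R → ∀ ξ, ξ ∈ Metric.closedBall (0:EuclideanSpace ℝ (Fin 2)) 2 →
      ‖F z ξ‖ ≤ C * Real.exp (2 * R) := by
    intro z hz ξ hξ
    rw [hnormF]
    have hξn : ‖ξ‖ ≤ 2 := mem_closedBall_zero_iff.1 hξ
    have hξ1 : |ξ 1| ≤ 2 := le_trans (coord_abs_le_norm ξ 1) hξn
    have harg : ξ 1 * z.im ≤ 2 * R := by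
      calc ξ 1 * z.im ≤ |ξ 1 * z.im| := le_abs_self _
      _ = |ξ 1| * |z.im| := abs_mul _ _
      _ ≤ 2 * R := by
          apply mul_le_mul hξ1 hz (abs_nonneg _) (by norm_num)
    exact mul_le_mul (hC _) (Real.exp_le_exp.2 harg) (Real.exp_pos _).le hC0
  have him : ∀ z ∈ Metric.ball z₀ 1, |z.im| ≤ R := by
    intro z hz
    have h1 : |z.im - z₀.im| ≤ ‖z - z₀‖ := by
      simpa using Complex.abs_im_le_norm (z - z₀)
    have h2 : ‖z - z₀‖ < 1 := by
      simpa [Complex.dist_eq] using Metric.mem_ball.mp hz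
    have : |z.im| ≤ |z₀.im| + |z.im - z₀.im| := by
      have := abs_sub_abs_le_abs_sub z.im z₀.im
      linarith [abs_sub_comm z.im z₀.im]
    linarith
  have h_bound : ∀ᵐ ξ ∂(volume : Measure (EuclideanSpace ℝ (Fin 2))),
      ∀ z ∈ Metric.ball z₀ 1, ‖F' z ξ‖ ≤ Bnd ξ := by
    apply Filter.Eventually.of_forall
    intro ξ z hz
    by_cases hξ : ξ ∈ Metric.closedBall (0:EuclideanSpace ℝ (Fin 2)) 2
    · rw [hBnd, Set.indicator_of_mem hξ]
      have h1 : ‖F' z ξ‖ = ‖F z ξ‖ * ‖cc ξ‖ := by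
        rw [hF', hF]
        simp [norm_mul, mul_assoc]
      rw [h1]
      have h2 : ‖cc ξ‖ ≤ 2 := by
        rw [hcc]
        simp only [norm_neg, norm_mul, Complex.norm_I, Complex.norm_real, Real.norm_eq_abs, one_mul]
        exact le_trans (coord_abs_le_norm ξ 1) (mem_closedBall_zero_iff.1 hξ)
      calc ‖F z ξ‖ * ‖cc ξ‖ ≤ (C * Real.exp (2 * R)) * 2 :=
            mul_le_mul (hbase z (him z hz) ξ hξ) h2 (norm_nonneg _)
              (mul_nonneg hC0 (Real.exp_pos _).le)
        _ = C * Real.exp (2 * R) * 2 := rfl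
    · rw [hBnd, Set.indicator_of_notMem hξ]
      have : F' z ξ = 0 := by
        rw [hF', hA]
        simp [hφzero ξ hξ]
      simp [this]
  have hF_int : Integrable (F z₀) volume := by
    apply Integrable.mono' hBint (hmeasF z₀)
    apply Filter.Eventually.of_forall
    intro ξ
    by_cases hξ : ξ ∈ Metric.closedBall (0:EuclideanSpace ℝ (Fin 2)) 2
    · rw [hBnd, Set.indicator_of_mem hξ]
      calc ‖F z₀ ξ‖ ≤ C * Real.exp (2 * R) :=
            hbase z₀ (by rw [hR]; linarith [abs_nonneg z₀.im]) ξ hξ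
        _ ≤ C * Real.exp (2 * R) * 2 := by
            nlinarith [mul_nonneg hC0 (Real.exp_pos (2*R)).le]
    · rw [hBnd, Set.indicator_of_notMem hξ]
      have : F z₀ ξ = 0 := by rw [hF, hA]; simp [hφzero ξ hξ]
      simp [this]
  have h_diff : ∀ᵐ ξ ∂(volume : Measure (EuclideanSpace ℝ (Fin 2))),
      ∀ z ∈ Metric.ball z₀ 1, HasDerivAt (fun z => F z ξ) (F' z ξ) z := by
    apply Filter.Eventually.of_forall
    intro ξ z _
    have h1 : HasDerivAt (fun z : ℂ => cc ξ * z) (cc ξ) z := by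
      simpa using (hasDerivAt_id z).const_mul (cc ξ)
    exact (h1.cexp).const_mul (A ξ)
  have key := hasDerivAt_integral_of_dominated_loc_of_deriv_le (Metric.ball_mem_nhds z₀ one_pos)
    (Filter.Eventually.of_forall hmeasF) hF_int hmeasF' h_bound hBint h_diff
  have : Phi φ t b = fun z => ∫ ξ : EuclideanSpace ℝ (Fin 2), F z ξ := rfl
  rw [this]
  exact key.2.differentiableAt



lemma deriv_entire {f : ℂ → ℂ} (hf : Differentiable ℂ f) : Differentiable ℂ (deriv f) :=
  ((contDiff_infty_iff_deriv.mp hf.contDiff).2).differentiable (by simp)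

lemma iteratedDeriv_comp_ofReal' {f : ℂ → ℂ} (hf : Differentiable ℂ f) (n : ℕ) (x : ℝ) :
    iteratedDeriv n (fun y : ℝ => f y) x = iteratedDeriv n f x := by
  induction n generalizing f with
  | zero => simp
  | succ n ih =>
    rw [iteratedDeriv_succ', iteratedDeriv_succ']
    have hd : deriv (fun y : ℝ => f y) = fun y : ℝ => deriv f y := by
      funext y; exact ((hf y).hasDerivAt.comp_ofReal).deriv
    rw [hd]
    exact ih (deriv_entire hf)

lemma iteratedDeriv_comp_mul_zero {f : ℂ → ℂ} (hf : Differentiable ℂ f) (n : ℕ) (c : ℂ) :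
    iteratedDeriv n (fun z => f (c * z)) 0 = c ^ n * iteratedDeriv n f 0 := by
  have h := iteratedDeriv_comp_const_mul (n := n) (f := f) (hf.contDiff) c
  rw [congrFun h 0, mul_zero]

lemma iteratedDeriv_odd_zero {f : ℂ → ℂ} (heven : ∀ z, f (-z) = f z) {n : ℕ} (hn : Odd n) :
    iteratedDeriv n f 0 = 0 := by
  have h := iteratedDeriv_comp_neg n f 0
  have h2 : (fun z : ℂ => f (-z)) = f := funext heven
  rw [h2, neg_zero, hn.neg_one_pow] at h
  rw [neg_smul, one_smul] at h
  linear_combination (1/2 : ℂ) * h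

lemma zero_iteratedDeriv : ∀ (n : ℕ), iteratedDeriv n (fun _ : ℝ => (0:ℂ)) = fun _ => 0 := by
  intro n
  induction n with
  | zero => funext y; simp
  | succ n ih => rw [iteratedDeriv_succ, ih]; funext y; simp

lemma iteratedDeriv_eq_zero_of_zero_on_Ioo {f : ℝ → ℂ} (hf : ContDiff ℝ (⊤ : ℕ∞) f) {a b x : ℝ}
    (hab : a < b) (h0 : ∀ s ∈ Set.Ioo a b, f s = 0) (hx : x ∈ Set.Icc a b) (n : ℕ) :
    iteratedDeriv n f x = 0 := by
  have hEq : Set.EqOn (iteratedDeriv n f) (iteratedDeriv n (fun _ : ℝ => (0:ℂ)))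
      (Set.Ioo a b) := Set.EqOn.iteratedDeriv_of_isOpen h0 isOpen_Ioo n
  rw [zero_iteratedDeriv] at hEq
  have hcont : Continuous (iteratedDeriv n f) := hf.continuous_iteratedDeriv n (by exact_mod_cast le_top)
  have hclos : Set.EqOn (iteratedDeriv n f) (fun _ => 0) (closure (Set.Ioo a b)) :=
    hEq.closure hcont continuous_const
  have hx' : x ∈ closure (Set.Ioo a b) := by
    rw [closure_Ioo hab.ne]; exact hx
  exact hclos hx'

lemma iteratedDeriv_sub' {f g : ℝ → ℂ} (hf : ContDiff ℝ (⊤ : ℕ∞) f) (hg : ContDiff ℝ (⊤ : ℕ∞) g)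
    (n : ℕ) (x : ℝ) :
    iteratedDeriv n (fun s => f s - g s) x = iteratedDeriv n f x - iteratedDeriv n g x := by
  have h := iteratedDerivWithin_sub (Set.mem_univ x) uniqueDiffOn_univ
    (hf.of_le (by exact_mod_cast le_top) : ContDiff ℝ (n:ℕ) f).contDiffWithinAt
    (hg.of_le (by exact_mod_cast le_top) : ContDiff ℝ (n:ℕ) g).contDiffWithinAt
  simpa [iteratedDerivWithin_univ, Pi.sub_def] using h



lemma hasDerivAt_iteratedDeriv {F : ℝ → ℂ} (hF : ContDiff ℝ (⊤ : ℕ∞) F) (k : ℕ) (x : ℝ) :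
    HasDerivAt (iteratedDeriv k F) (iteratedDeriv (k+1) F x) x := by
  have h : Differentiable ℝ (iteratedDeriv k F) :=
    hF.differentiable_iteratedDeriv k (by exact_mod_cast ENat.coe_lt_top k)
  have h2 := (h x).hasDerivAt
  rwa [show iteratedDeriv (k+1) F = deriv (iteratedDeriv k F) from iteratedDeriv_succ]

lemma ibp_cos {F : ℝ → ℂ} (hF : ContDiff ℝ (⊤ : ℕ∞) F) {ν : ℝ} (hν : ν ≠ 0) (k : ℕ) :
    (∫ s in (0:ℝ)..Real.pi, iteratedDeriv k F s * ((Real.cos (ν * s) : ℝ) : ℂ))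
    = iteratedDeriv k F Real.pi * ((Real.sin (ν * Real.pi) / ν : ℝ) : ℂ)
      + iteratedDeriv (k+1) F Real.pi * ((Real.cos (ν * Real.pi) / ν^2 : ℝ) : ℂ)
      - iteratedDeriv (k+1) F 0 * ((1 / ν^2 : ℝ) : ℂ)
      - (1 / (ν:ℂ)^2) *
        ∫ s in (0:ℝ)..Real.pi, iteratedDeriv (k+2) F s * ((Real.cos (ν * s) : ℝ) : ℂ) := by
  have hid : ∀ x : ℝ, HasDerivAt (fun s : ℝ => ν * s) ν x := by
    intro x; simpa using (hasDerivAt_id x).const_mul ν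
  have hv1 : ∀ x : ℝ, HasDerivAt (fun s : ℝ => ((Real.sin (ν * s) / ν : ℝ) : ℂ))
      ((Real.cos (ν * x) : ℝ) : ℂ) x := by
    intro x
    have h2 := (Real.hasDerivAt_sin (ν * x)).comp x (hid x)
    have h3 := h2.div_const ν
    have h4 : Real.cos (ν * x) * ν / ν = Real.cos (ν * x) := by
      field_simp
    rw [h4] at h3
    exact h3.ofReal_comp
  have hv2 : ∀ x : ℝ, HasDerivAt (fun s : ℝ => ((-Real.cos (ν * s) / ν^2 : ℝ) : ℂ))
      ((Real.sin (ν * x) / ν : ℝ) : ℂ) x := by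
    intro x
    have h2 := ((Real.hasDerivAt_cos (ν * x)).comp x (hid x)).neg.div_const (ν^2)
    have h4 : -(-Real.sin (ν * x) * ν) / ν^2 = Real.sin (ν * x) / ν := by
      field_simp
    rw [h4] at h2
    exact h2.ofReal_comp
  have hcos_cont : Continuous (fun s : ℝ => ((Real.cos (ν * s) : ℝ) : ℂ)) :=
    Complex.continuous_ofReal.comp (Real.continuous_cos.comp (continuous_const.mul continuous_id))
  have hsin_cont : Continuous (fun s : ℝ => ((Real.sin (ν * s) / ν : ℝ) : ℂ)) :=
    Complex.continuous_ofReal.comp ((Real.continuous_sin.comp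
      (continuous_const.mul continuous_id)).div_const ν)
  have step1 := intervalIntegral.integral_mul_deriv_eq_deriv_mul
    (u := iteratedDeriv k F) (u' := iteratedDeriv (k+1) F)
    (v := fun s : ℝ => ((Real.sin (ν * s) / ν : ℝ) : ℂ))
    (v' := fun s : ℝ => ((Real.cos (ν * s) : ℝ) : ℂ))
    (a := 0) (b := Real.pi)
    (fun x _ => hasDerivAt_iteratedDeriv hF k x) (fun x _ => hv1 x)
    ((hF.continuous_iteratedDeriv _ (by exact_mod_cast le_top)).intervalIntegrable _ _)
    (hcos_cont.intervalIntegrable _ _)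
  have step2 := intervalIntegral.integral_mul_deriv_eq_deriv_mul
    (u := iteratedDeriv (k+1) F) (u' := iteratedDeriv (k+2) F)
    (v := fun s : ℝ => ((-Real.cos (ν * s) / ν^2 : ℝ) : ℂ))
    (v' := fun s : ℝ => ((Real.sin (ν * s) / ν : ℝ) : ℂ))
    (a := 0) (b := Real.pi)
    (fun x _ => hasDerivAt_iteratedDeriv hF (k+1) x) (fun x _ => hv2 x)
    ((hF.continuous_iteratedDeriv _ (WithTop.coe_le_coe.mpr le_top)).intervalIntegrable _ _)
    (hsin_cont.intervalIntegrable _ _)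
  have hlast : (∫ s in (0:ℝ)..Real.pi,
        iteratedDeriv (k+2) F s * ((-Real.cos (ν * s) / ν^2 : ℝ) : ℂ))
      = (-(1/(ν:ℂ)^2)) *
        ∫ s in (0:ℝ)..Real.pi, iteratedDeriv (k+2) F s * ((Real.cos (ν * s) : ℝ) : ℂ) := by
    rw [← intervalIntegral.integral_const_mul]
    apply intervalIntegral.integral_congr
    intro s _
    push_cast
    ring
  rw [hlast] at step2
  rw [step1, step2]
  simp only [mul_zero, Real.sin_zero, Real.cos_zero, zero_div]
  push_cast
  ring

lemma ibp_exp {G : ℝ → ℂ} (hG : ContDiff ℝ (⊤ : ℕ∞) G) {ν : ℝ} (hν : ν ≠ 0) (k : ℕ) :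
    (∫ s in (0:ℝ)..Real.pi, iteratedDeriv k G s * ((Real.exp (-(s * ν)) : ℝ) : ℂ))
    = - iteratedDeriv k G Real.pi * ((Real.exp (-(Real.pi * ν)) / ν : ℝ) : ℂ)
      + iteratedDeriv k G 0 * ((1 / ν : ℝ) : ℂ)
      - iteratedDeriv (k+1) G Real.pi * ((Real.exp (-(Real.pi * ν)) / ν^2 : ℝ) : ℂ)
      + iteratedDeriv (k+1) G 0 * ((1 / ν^2 : ℝ) : ℂ)
      + (1 / (ν:ℂ)^2) *
        ∫ s in (0:ℝ)..Real.pi, iteratedDeriv (k+2) G s * ((Real.exp (-(s * ν)) : ℝ) : ℂ) := by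
  have hid : ∀ x : ℝ, HasDerivAt (fun s : ℝ => -(s * ν)) (-ν) x := by
    intro x; simpa [Pi.neg_def] using ((hasDerivAt_id x).mul_const ν).neg
  have hv1 : ∀ x : ℝ, HasDerivAt (fun s : ℝ => ((-Real.exp (-(s * ν)) / ν : ℝ) : ℂ))
      ((Real.exp (-(x * ν)) : ℝ) : ℂ) x := by
    intro x
    have h2 := ((Real.hasDerivAt_exp (-(x * ν))).comp x (hid x)).neg.div_const ν
    have h4 : -(Real.exp (-(x * ν)) * -ν) / ν = Real.exp (-(x * ν)) := by
      field_simp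
    rw [h4] at h2
    exact h2.ofReal_comp
  have hv2 : ∀ x : ℝ, HasDerivAt (fun s : ℝ => ((Real.exp (-(s * ν)) / ν^2 : ℝ) : ℂ))
      ((-Real.exp (-(x * ν)) / ν : ℝ) : ℂ) x := by
    intro x
    have h2 := ((Real.hasDerivAt_exp (-(x * ν))).comp x (hid x)).div_const (ν^2)
    have h4 : Real.exp (-(x * ν)) * -ν / ν^2 = -Real.exp (-(x * ν)) / ν := by
      field_simp
    rw [h4] at h2
    exact h2.ofReal_comp
  have hexp_cont : Continuous (fun s : ℝ => ((Real.exp (-(s * ν)) : ℝ) : ℂ)) :=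
    Complex.continuous_ofReal.comp (Real.continuous_exp.comp
      ((continuous_id.mul continuous_const).neg))
  have hexp_cont2 : Continuous (fun s : ℝ => ((-Real.exp (-(s * ν)) / ν : ℝ) : ℂ)) :=
    Complex.continuous_ofReal.comp ((Real.continuous_exp.comp
      ((continuous_id.mul continuous_const).neg)).neg.div_const ν)
  have step1 := intervalIntegral.integral_mul_deriv_eq_deriv_mul
    (u := iteratedDeriv k G) (u' := iteratedDeriv (k+1) G)
    (v := fun s : ℝ => ((-Real.exp (-(s * ν)) / ν : ℝ) : ℂ))
    (v' := fun s : ℝ => ((Real.exp (-(s * ν)) : ℝ) : ℂ))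
    (a := 0) (b := Real.pi)
    (fun x _ => hasDerivAt_iteratedDeriv hG k x) (fun x _ => hv1 x)
    ((hG.continuous_iteratedDeriv _ (by exact_mod_cast le_top)).intervalIntegrable _ _)
    (hexp_cont.intervalIntegrable _ _)
  have step2 := intervalIntegral.integral_mul_deriv_eq_deriv_mul
    (u := iteratedDeriv (k+1) G) (u' := iteratedDeriv (k+2) G)
    (v := fun s : ℝ => ((Real.exp (-(s * ν)) / ν^2 : ℝ) : ℂ))
    (v' := fun s : ℝ => ((-Real.exp (-(s * ν)) / ν : ℝ) : ℂ))
    (a := 0) (b := Real.pi)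
    (fun x _ => hasDerivAt_iteratedDeriv hG (k+1) x) (fun x _ => hv2 x)
    ((hG.continuous_iteratedDeriv _ (WithTop.coe_le_coe.mpr le_top)).intervalIntegrable _ _)
    (hexp_cont2.intervalIntegrable _ _)
  have hlast : (∫ s in (0:ℝ)..Real.pi,
        iteratedDeriv (k+2) G s * ((Real.exp (-(s * ν)) / ν^2 : ℝ) : ℂ))
      = (1/(ν:ℂ)^2) *
        ∫ s in (0:ℝ)..Real.pi, iteratedDeriv (k+2) G s * ((Real.exp (-(s * ν)) : ℝ) : ℂ) := by
    rw [← intervalIntegral.integral_const_mul]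
    apply intervalIntegral.integral_congr
    intro s _
    push_cast
    ring
  rw [hlast] at step2
  rw [step1, step2]
  simp only [zero_mul, neg_zero, Real.exp_zero]
  push_cast
  ring


end IBPAux

/-- The integration-by-parts identity relating the propagating and diffractive parts:
`(1/π)∫_0^π W(t,𝐦_s) χ_δ(π−s) cos(νs) ds − (sin(νπ)/π)∫_0^∞ W(t,𝐧_s) χ_δ(s) e^{−sν} ds`
equals
`((−1)^m/π)∫_0^π (∂_s)^{2m}[W(t,𝐦_s) χ_δ(π−s)] cos(νs)/ν^{2m} ds −
 (sin(νπ)/π)∫_0^∞ (∂_s)^{2m}[W(t,𝐧_s) χ_δ(s)] e^{−sν}/ν^{2m} ds`. -/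
theorem integration_by_parts_identity
    (φ : ℝ → ℝ) (hφ : ContDiff ℝ (⊤ : ℕ∞) φ) (hφsupp : Function.support φ ⊆ Set.Icc 1 2)
    (χ : ℝ → ℝ) (δ : ℝ) (hδ0 : 0 < δ) (hδπ : δ < Real.pi / 2)
    (hχ : ContDiff ℝ (⊤ : ℕ∞) χ) (hχ01 : ∀ s, χ s ∈ Set.Icc (0 : ℝ) 1)
    (hχ1 : ∀ s ∈ Set.Icc (0 : ℝ) δ, χ s = 1) (hχ0 : ∀ s : ℝ, 2 * δ ≤ s → χ s = 0)
    (m : ℕ) (ν : ℝ) (hν : 0 < ν) (t r₁ r₂ : ℝ) (hr₁ : 0 < r₁) (hr₂ : 0 < r₂) :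
    (1 / (Real.pi : ℂ)) *
        (∫ s in (0 : ℝ)..Real.pi,
          Wfun φ t (mVec r₁ r₂ s) * (χ (Real.pi - s) : ℂ) * (Real.cos (ν * s) : ℂ)) -
      ((Real.sin (ν * Real.pi) : ℂ) / (Real.pi : ℂ)) *
        (∫ s in Set.Ioi (0 : ℝ),
          Wfun φ t (nVec r₁ r₂ s) * (χ s : ℂ) * (Real.exp (-(s * ν)) : ℂ)) =
    ((-1 : ℂ) ^ m / (Real.pi : ℂ)) *
        (∫ s in (0 : ℝ)..Real.pi,
          iteratedDeriv (2 * m) (fun u => Wfun φ t (mVec r₁ r₂ u) * (χ (Real.pi - u) : ℂ)) s *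
            ((Real.cos (ν * s) / ν ^ (2 * m) : ℝ) : ℂ)) -
      ((Real.sin (ν * Real.pi) : ℂ) / (Real.pi : ℂ)) *
        (∫ s in Set.Ioi (0 : ℝ),
          iteratedDeriv (2 * m) (fun u => Wfun φ t (nVec r₁ r₂ u) * (χ u : ℂ)) s *
            ((Real.exp (-(s * ν)) / ν ^ (2 * m) : ℝ) : ℂ)) := by
  have hπpos := Real.pi_pos
  have h2δπ : 2*δ < Real.pi := by linarith
  have hνne : ν ≠ 0 := ne_of_gt hν
  have hPhidiff : Differentiable ℂ (IBPAux.Phi φ t (r₁ - r₂)) :=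
    IBPAux.Phi_differentiable φ hφ.continuous hφsupp t (r₁ - r₂)
  set E : ℂ → ℂ := fun z =>
    IBPAux.Phi φ t (r₁ - r₂) (((2 * Real.sqrt (r₁*r₂) : ℝ) : ℂ) * Complex.cos (z/2)) with hE
  have hEdiff : Differentiable ℂ E := by
    apply hPhidiff.comp
    exact (Complex.differentiable_cos.comp (differentiable_id.div_const 2)).const_mul _
  have hEeven : ∀ z, E (-z) = E z := by
    intro z; rw [hE]; simp only [neg_div, Complex.cos_neg]
  have ha2 : (Real.sqrt (r₁*r₂))^2 = r₁*r₂ := Real.sq_sqrt (by positivity)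
  have hnormm : ∀ (x y : ℝ),
      ‖((WithLp.equiv 2 (Fin 2 → ℝ)).symm ![x, y] : EuclideanSpace ℝ (Fin 2))‖
        = Real.sqrt (x^2 + y^2) := by
    intro x y
    rw [EuclideanSpace.norm_eq]
    congr 1
    simp [Fin.sum_univ_two, Real.norm_eq_abs, sq_abs]
  have hmE : ∀ s : ℝ, Wfun φ t (mVec r₁ r₂ s) = E ((s:ℂ) - (Real.pi:ℂ)) := by
    intro s
    have hcos1 : Real.cos s ≤ 1 := Real.cos_le_one s
    have hyn : (0:ℝ) ≤ 2 * (1 - Real.cos s) * r₁ * r₂ := by nlinarith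
    have hsin : Real.sin (s/2)^2 + Real.cos (s/2)^2 = 1 := Real.sin_sq_add_cos_sq _
    have hcos2 : Real.cos s = 2 * Real.cos (s/2)^2 - 1 := by
      have h := Real.cos_two_mul (s/2)
      rw [show 2*(s/2) = s by ring] at h
      linarith
    have hnorm : ‖mVec r₁ r₂ s‖ =
        ‖((WithLp.equiv 2 (Fin 2 → ℝ)).symm
            ![r₁ - r₂, 2 * Real.sqrt (r₁*r₂) * Real.sin (s/2)] : EuclideanSpace ℝ (Fin 2))‖ := by
      show ‖((WithLp.equiv 2 (Fin 2 → ℝ)).symm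
          ![r₁ - r₂, Real.sqrt (2*(1 - Real.cos s)*r₁*r₂)] : EuclideanSpace ℝ (Fin 2))‖ = _
      rw [hnormm, hnormm]
      congr 1
      rw [Real.sq_sqrt hyn]
      nlinarith [ha2]
    rw [IBPAux.Wfun_radial φ t _ _ hnorm,
      IBPAux.Wfun_eq_Phi φ t (r₁ - r₂) (2 * Real.sqrt (r₁*r₂) * Real.sin (s/2)), hE]
    congr 1
    have harg : ((s:ℂ) - (Real.pi:ℂ))/2 = (((s - Real.pi)/2 : ℝ) : ℂ) := by push_cast; ring
    rw [harg, ← Complex.ofReal_cos,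
      show (s - Real.pi)/2 = -(Real.pi/2 - s/2) by ring, Real.cos_neg, Real.cos_pi_div_two_sub]
    push_cast; ring
  have hnE : ∀ s : ℝ, Wfun φ t (nVec r₁ r₂ s) = E (Complex.I * (s:ℂ)) := by
    intro s
    have hcosh1 : 1 ≤ Real.cosh s := Real.one_le_cosh s
    have hyn : (0:ℝ) ≤ 2 * (Real.cosh s - 1) * r₁ * r₂ := by nlinarith
    have hch : Real.cosh s = 2 * Real.cosh (s/2)^2 - 1 := by
      have h1 := Real.cosh_two_mul (s/2)
      have h2 := Real.cosh_sq_sub_sinh_sq (s/2)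
      rw [show 2*(s/2) = s by ring] at h1
      linarith
    have hnorm : ‖nVec r₁ r₂ s‖ =
        ‖((WithLp.equiv 2 (Fin 2 → ℝ)).symm
            ![r₁ - r₂, 2 * Real.sqrt (r₁*r₂) * Real.cosh (s/2)] : EuclideanSpace ℝ (Fin 2))‖ := by
      show ‖((WithLp.equiv 2 (Fin 2 → ℝ)).symm
          ![r₁ + r₂, Real.sqrt (2*(Real.cosh s - 1)*r₁*r₂)] : EuclideanSpace ℝ (Fin 2))‖ = _
      rw [hnormm, hnormm]
      congr 1
      rw [Real.sq_sqrt hyn]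
      nlinarith [ha2]
    rw [IBPAux.Wfun_radial φ t _ _ hnorm,
      IBPAux.Wfun_eq_Phi φ t (r₁ - r₂) (2 * Real.sqrt (r₁*r₂) * Real.cosh (s/2)), hE]
    congr 1
    have harg : Complex.I * (s:ℂ) / 2 = ((s/2 : ℝ) : ℂ) * Complex.I := by push_cast; ring
    rw [harg, Complex.cos_mul_I, ← Complex.ofReal_cosh]
    push_cast; ring
  set FF : ℝ → ℂ := fun s => E ((s:ℂ) - (Real.pi:ℂ)) * ((χ (Real.pi - s) : ℝ) : ℂ) with hFF
  set GG : ℝ → ℂ := fun s => E (Complex.I * (s:ℂ)) * ((χ s : ℝ) : ℂ) with hGG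
  have hFFfun : (fun u => Wfun φ t (mVec r₁ r₂ u) * ((χ (Real.pi - u) : ℝ) : ℂ)) = FF := by
    funext u; rw [hmE u]
  have hGGfun : (fun u => Wfun φ t (nVec r₁ r₂ u) * ((χ u : ℝ) : ℂ)) = GG := by
    funext u; rw [hnE u]
  have hEc : ContDiff ℝ (⊤ : ℕ∞) E := (hEdiff.contDiff (n := (⊤ : ℕ∞))).restrict_scalars ℝ
  have hcoe : ContDiff ℝ (⊤ : ℕ∞) (fun x : ℝ => (x:ℂ)) := Complex.ofRealCLM.contDiff
  have hp_sm : ContDiff ℝ (⊤ : ℕ∞) (fun x : ℝ => E ((x:ℂ) - (Real.pi:ℂ))) :=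
    hEc.comp (hcoe.sub contDiff_const)
  have hq_sm : ContDiff ℝ (⊤ : ℕ∞) (fun x : ℝ => E (Complex.I * (x:ℂ))) :=
    hEc.comp (contDiff_const.mul hcoe)
  have hχc : ContDiff ℝ (⊤ : ℕ∞) (fun s : ℝ => ((χ (Real.pi - s) : ℝ) : ℂ)) :=
    Complex.ofRealCLM.contDiff.comp (hχ.comp (contDiff_const.sub contDiff_id))
  have hχc2 : ContDiff ℝ (⊤ : ℕ∞) (fun s : ℝ => ((χ s : ℝ) : ℂ)) :=
    Complex.ofRealCLM.contDiff.comp hχ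
  have hFFsm : ContDiff ℝ (⊤ : ℕ∞) FF := hp_sm.mul hχc
  have hGGsm : ContDiff ℝ (⊤ : ℕ∞) GG := hq_sm.mul hχc2
  set D : ℕ → ℂ := fun n => iteratedDeriv n E 0 with hD
  have hDodd : ∀ j : ℕ, D (2*j+1) = 0 := by
    intro j
    exact IBPAux.iteratedDeriv_odd_zero hEeven ⟨j, by ring⟩
  have hp_val : ∀ n : ℕ, iteratedDeriv n (fun x : ℝ => E ((x:ℂ) - (Real.pi:ℂ))) Real.pi = D n := by
    intro n
    have hfun : (fun x : ℝ => E ((x:ℂ) - (Real.pi:ℂ)))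
        = fun x : ℝ => (fun y : ℝ => E ((y:ℂ))) (x + (-Real.pi)) := by
      funext x; congr 1; push_cast; ring
    rw [hfun, iteratedDeriv_comp_add_const n (fun y : ℝ => E ((y:ℂ))) (-Real.pi)]
    show iteratedDeriv n (fun y : ℝ => E ((y:ℂ))) (Real.pi + -Real.pi) = D n
    rw [show Real.pi + -Real.pi = (0:ℝ) by ring,
      IBPAux.iteratedDeriv_comp_ofReal' hEdiff n 0, Complex.ofReal_zero]
  have hq_val : ∀ n : ℕ, iteratedDeriv n (fun x : ℝ => E (Complex.I * (x:ℂ))) 0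
      = Complex.I^n * D n := by
    intro n
    have h1 : iteratedDeriv n (fun x : ℝ => E (Complex.I * (x:ℂ))) 0
        = iteratedDeriv n (fun z : ℂ => E (Complex.I * z)) ((0:ℝ):ℂ) :=
      IBPAux.iteratedDeriv_comp_ofReal' (f := fun z : ℂ => E (Complex.I * z)) (hEdiff.comp (differentiable_id.const_mul _)) n 0
    rw [h1, Complex.ofReal_zero, IBPAux.iteratedDeriv_comp_mul_zero hEdiff n Complex.I]
  have hFF0 : ∀ n, iteratedDeriv n FF 0 = 0 := by
    intro n
    apply IBPAux.iteratedDeriv_eq_zero_of_zero_on_Ioo hFFsm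
      (show (-1:ℝ) < Real.pi - 2*δ by linarith) _
      (Set.mem_Icc.2 ⟨by norm_num, by linarith⟩) n
    intro s hs
    have hz : χ (Real.pi - s) = 0 := hχ0 _ (by
      obtain ⟨h1, h2⟩ := hs; linarith)
    show E ((s:ℂ) - (Real.pi:ℂ)) * ((χ (Real.pi - s) : ℝ) : ℂ) = 0
    rw [hz]; simp
  have hFFπ : ∀ n, iteratedDeriv n FF Real.pi = D n := by
    intro n
    have hzero : ∀ s ∈ Set.Ioo (Real.pi - δ) Real.pi,
        FF s - E ((s:ℂ) - (Real.pi:ℂ)) = 0 := by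
      intro s hs
      obtain ⟨hs1, hs2⟩ := hs
      have hχ1' : χ (Real.pi - s) = 1 := hχ1 _ (Set.mem_Icc.2 ⟨by linarith, by linarith⟩)
      show E ((s:ℂ) - (Real.pi:ℂ)) * ((χ (Real.pi - s) : ℝ) : ℂ)
        - E ((s:ℂ) - (Real.pi:ℂ)) = 0
      rw [hχ1']; simp
    have hd := IBPAux.iteratedDeriv_eq_zero_of_zero_on_Ioo
      (hFFsm.sub hp_sm) (show Real.pi - δ < Real.pi by linarith) hzero
      (Set.mem_Icc.2 ⟨by linarith, le_refl _⟩) n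
    rw [IBPAux.iteratedDeriv_sub' hFFsm hp_sm n Real.pi, sub_eq_zero] at hd
    rw [hd, hp_val n]
  have hGG0 : ∀ n, iteratedDeriv n GG 0 = Complex.I^n * D n := by
    intro n
    have hzero : ∀ s ∈ Set.Ioo (0:ℝ) δ, GG s - E (Complex.I * (s:ℂ)) = 0 := by
      intro s hs
      have hχ1' : χ s = 1 := hχ1 _ (Set.mem_Icc.2 ⟨hs.1.le, hs.2.le⟩)
      show E (Complex.I * (s:ℂ)) * ((χ s : ℝ) : ℂ) - E (Complex.I * (s:ℂ)) = 0
      rw [hχ1']; simp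
    have hd := IBPAux.iteratedDeriv_eq_zero_of_zero_on_Ioo (hGGsm.sub hq_sm) hδ0 hzero
      (Set.mem_Icc.2 ⟨le_refl _, hδ0.le⟩) n
    rw [IBPAux.iteratedDeriv_sub' hGGsm hq_sm n 0, sub_eq_zero] at hd
    rw [hd, hq_val n]
  have hGGvan : ∀ (n : ℕ) (s : ℝ), Real.pi ≤ s → iteratedDeriv n GG s = 0 := by
    intro n s hs
    apply IBPAux.iteratedDeriv_eq_zero_of_zero_on_Ioo hGGsm
      (show 2*δ < s + 1 by linarith) _
      (Set.mem_Icc.2 ⟨by linarith, by linarith⟩) n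
    intro u hu
    have hz : χ u = 0 := hχ0 u hu.1.le
    show E (Complex.I * (u:ℂ)) * ((χ u : ℝ) : ℂ) = 0
    rw [hz]; simp
  have hIoi : ∀ (n : ℕ) (c : ℝ),
      (∫ s in Set.Ioi (0:ℝ), iteratedDeriv n GG s * ((Real.exp (-(s*ν)) / c : ℝ) : ℂ))
      = ∫ s in (0:ℝ)..Real.pi, iteratedDeriv n GG s * ((Real.exp (-(s*ν)) / c : ℝ) : ℂ) := by
    intro n c
    have hfc : Continuous (fun s : ℝ =>
        iteratedDeriv n GG s * ((Real.exp (-(s*ν)) / c : ℝ) : ℂ)) := by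
      apply (hGGsm.continuous_iteratedDeriv n (by exact_mod_cast le_top)).mul
      exact Complex.continuous_ofReal.comp ((Real.continuous_exp.comp
        ((continuous_id.mul continuous_const).neg)).div_const c)
    have hzero : ∀ s ∈ Set.Ioi Real.pi,
        iteratedDeriv n GG s * ((Real.exp (-(s*ν)) / c : ℝ) : ℂ) = 0 := by
      intro s hs; rw [hGGvan n s (le_of_lt hs)]; simp
    rw [← Set.Ioc_union_Ioi_eq_Ioi Real.pi_pos.le,
      setIntegral_union (Set.Ioc_disjoint_Ioi le_rfl) measurableSet_Ioi
        hfc.integrableOn_Ioc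
        (IntegrableOn.congr_fun integrableOn_zero
          (fun s hs => (hzero s hs).symm) measurableSet_Ioi),
      setIntegral_congr_fun measurableSet_Ioi hzero,
      intervalIntegral.integral_of_le Real.pi_pos.le]
    simp
  have hpullA : ∀ (n k : ℕ),
      (∫ s in (0:ℝ)..Real.pi, iteratedDeriv n FF s * ((Real.cos (ν*s) / ν^k : ℝ) : ℂ))
      = (1/(ν:ℂ)^k) *
        ∫ s in (0:ℝ)..Real.pi, iteratedDeriv n FF s * ((Real.cos (ν*s) : ℝ) : ℂ) := by
    intro n k
    rw [← intervalIntegral.integral_const_mul]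
    apply intervalIntegral.integral_congr
    intro s _
    push_cast
    ring
  have hpullB : ∀ (n k : ℕ),
      (∫ s in (0:ℝ)..Real.pi, iteratedDeriv n GG s * ((Real.exp (-(s*ν)) / ν^k : ℝ) : ℂ))
      = (1/(ν:ℂ)^k) *
        ∫ s in (0:ℝ)..Real.pi, iteratedDeriv n GG s * ((Real.exp (-(s*ν)) : ℝ) : ℂ) := by
    intro n k
    rw [← intervalIntegral.integral_const_mul]
    apply intervalIntegral.integral_congr
    intro s _
    push_cast
    ring
  have hI2 : ∀ i : ℕ, Complex.I^(2*i) = (-1:ℂ)^i := by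
    intro i; rw [pow_mul, Complex.I_sq]
  rw [hFFfun, hGGfun]
  have key : ∀ j : ℕ,
      ((-1:ℂ)^j / (Real.pi:ℂ)) *
        (∫ s in (0:ℝ)..Real.pi,
          iteratedDeriv (2*j) FF s * ((Real.cos (ν*s) / ν^(2*j) : ℝ) : ℂ))
      - ((Real.sin (ν*Real.pi):ℂ)/(Real.pi:ℂ)) *
        (∫ s in Set.Ioi (0:ℝ),
          iteratedDeriv (2*j) GG s * ((Real.exp (-(s*ν)) / ν^(2*j) : ℝ) : ℂ))
      = ((1:ℂ) / (Real.pi:ℂ)) *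
        (∫ s in (0:ℝ)..Real.pi,
          iteratedDeriv 0 FF s * ((Real.cos (ν*s) / ν^0 : ℝ) : ℂ))
      - ((Real.sin (ν*Real.pi):ℂ)/(Real.pi:ℂ)) *
        (∫ s in Set.Ioi (0:ℝ),
          iteratedDeriv 0 GG s * ((Real.exp (-(s*ν)) / ν^0 : ℝ) : ℂ)) := by
    intro j
    induction j with
    | zero => norm_num
    | succ i ih =>
      rw [← ih]
      rw [show 2*(i+1) = 2*i+2 by ring]
      rw [hIoi (2*i+2) (ν^(2*i+2)), hIoi (2*i) (ν^(2*i))]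
      rw [hpullA (2*i+2) (2*i+2), hpullA (2*i) (2*i),
        hpullB (2*i+2) (2*i+2), hpullB (2*i) (2*i)]
      rw [IBPAux.ibp_cos hFFsm hνne (2*i), IBPAux.ibp_exp hGGsm hνne (2*i)]
      rw [hFFπ (2*i), hFFπ (2*i+1), hFF0 (2*i+1), hGG0 (2*i), hGG0 (2*i+1),
        hGGvan (2*i) Real.pi le_rfl, hGGvan (2*i+1) Real.pi le_rfl, hDodd i, hI2 i]
      rw [show (2*i+2) = (2*i)+2 by ring, pow_add, pow_succ]
      push_cast
      ring
  rw [key m]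
  have hA0 : (∫ s in (0:ℝ)..Real.pi,
        Wfun φ t (mVec r₁ r₂ s) * ((χ (Real.pi - s) : ℝ) : ℂ) * ((Real.cos (ν * s) : ℝ) : ℂ))
      = ∫ s in (0:ℝ)..Real.pi,
        iteratedDeriv 0 FF s * ((Real.cos (ν*s) / ν^0 : ℝ) : ℂ) := by
    apply intervalIntegral.integral_congr
    intro s _
    simp only [iteratedDeriv_zero, pow_zero, div_one]
    rw [hmE s]
  have hB0 : (∫ s in Set.Ioi (0:ℝ),
        Wfun φ t (nVec r₁ r₂ s) * ((χ s : ℝ) : ℂ) * ((Real.exp (-(s * ν)) : ℝ) : ℂ))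
      = ∫ s in Set.Ioi (0:ℝ),
        iteratedDeriv 0 GG s * ((Real.exp (-(s*ν)) / ν^0 : ℝ) : ℂ) := by
    apply setIntegral_congr_fun measurableSet_Ioi
    intro s _
    simp only [iteratedDeriv_zero, pow_zero, div_one]
    rw [hnE s]
  rw [hA0, hB0]
end

section
/- There is an absolute constant C such that for all ν ≥ 1/2 and all r ≥ 2ν, the integral ∫_0^∞ e^{-t} t^{ν-1/2} (1 + it/(2r))^{ν-1/2} dt converges absolutely and (1/Γ(ν+1/2)) ∫_0^∞ e^{-t} t^{ν-1/2} |(1 + it/(2r))^{ν-1/2}| dt ≤ C · 2^ν. -/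
/-!
Since `‖1 + it/(2r)‖ ≤ 1 + t/(2r) ≤ e^{t/(2r)}` and `(ν - 1/2)/(2r) ≤ 1/4`, the complex
power has modulus at most `e^{t/4}`. The integrand is therefore dominated by the Gamma kernel
`t^{ν-1/2} e^{-3t/4}`, whose integral is `(4/3)^{ν+1/2} Γ(ν+1/2)`, and
`(4/3)^{ν+1/2} ≤ 2^{ν+1/2} ≤ 2 · 2^ν`.
-/

open MeasureTheory Set

theorem Complex.norm_one_add_cpow_le_exp (z : ℂ) {s : ℝ} (hs : 0 ≤ s) :
    ‖(1 + z) ^ (s : ℂ)‖ ≤ Real.exp (s * ‖z‖) := by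
  rw [Complex.norm_cpow_real, mul_comm, Real.exp_mul]
  gcongr
  calc ‖1 + z‖ ≤ ‖z‖ + 1 := by simpa [add_comm] using norm_add_le (1 : ℂ) z
    _ ≤ Real.exp ‖z‖ := Real.add_one_le_exp _

theorem norm_one_add_I_mul_div_cpow_le_exp {ν r t : ℝ} (hν : 1 / 2 ≤ ν) (hr : 2 * ν ≤ r)
    (ht : 0 ≤ t) :
    ‖(1 + Complex.I * (t : ℂ) / (2 * (r : ℂ))) ^ ((ν : ℂ) - 1 / 2)‖ ≤ Real.exp (t / 4) := by
  have hr0 : 0 < r := by linarith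
  have h := Complex.norm_one_add_cpow_le_exp (Complex.I * t / (2 * r)) (s := ν - 1 / 2)
    (by linarith)
  push_cast at h
  refine h.trans (Real.exp_le_exp.mpr ?_)
  rw [norm_div, norm_mul, Complex.norm_I, Complex.norm_real, Real.norm_of_nonneg ht]
  have h2r : ‖(2 : ℂ) * r‖ = 2 * r := by simp [abs_of_pos hr0]
  rw [h2r, one_mul, ← mul_div_assoc, div_le_div_iff₀ (by positivity) (by norm_num)]
  nlinarith [mul_nonneg ht (by linarith : 0 ≤ r - 2 * ν)]

theorem integrableOn_rpow_mul_exp_neg_mul_Ioi {a r : ℝ} (ha : 0 < a) (hr : 0 < r) :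
    IntegrableOn (fun t : ℝ => t ^ (a - 1) * Real.exp (-(r * t))) (Ioi 0) := by
  simpa [neg_mul] using integrableOn_rpow_mul_exp_neg_mul_rpow (p := 1) (by linarith) one_pos hr

theorem macdonald_integrand_le {ν r t : ℝ} (hν : 1 / 2 ≤ ν) (hr : 2 * ν ≤ r) (ht : 0 ≤ t) :
    Real.exp (-t) * t ^ (ν - 1 / 2) *
        ‖(1 + Complex.I * (t : ℂ) / (2 * (r : ℂ))) ^ ((ν : ℂ) - 1 / 2)‖ ≤
      t ^ (ν + 1 / 2 - 1) * Real.exp (-(3 / 4 * t)) :=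
  calc _ ≤ Real.exp (-t) * t ^ (ν - 1 / 2) * Real.exp (t / 4) := by
        gcongr; exact norm_one_add_I_mul_div_cpow_le_exp hν hr ht
    _ = t ^ (ν + 1 / 2 - 1) * Real.exp (-(3 / 4 * t)) := by
        rw [mul_right_comm, ← Real.exp_add]; ring_nf

theorem norm_macdonald_integrand {ν r t : ℝ} (ht : 0 < t) :
    ‖((Real.exp (-t) * t ^ (ν - 1 / 2) : ℝ) : ℂ) *
        (1 + Complex.I * (t : ℂ) / (2 * (r : ℂ))) ^ ((ν : ℂ) - 1 / 2)‖ =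
      Real.exp (-t) * t ^ (ν - 1 / 2) *
        ‖(1 + Complex.I * (t : ℂ) / (2 * (r : ℂ))) ^ ((ν : ℂ) - 1 / 2)‖ := by
  rw [norm_mul, Complex.norm_real, Real.norm_of_nonneg (by positivity)]

theorem four_thirds_rpow_add_half_le {ν : ℝ} (hν : -(1 / 2) ≤ ν) :
    (1 / (3 / 4) : ℝ) ^ (ν + 1 / 2) ≤ 2 * 2 ^ ν :=
  calc (1 / (3 / 4) : ℝ) ^ (ν + 1 / 2) ≤ 2 ^ (ν + 1 / 2) := by
        gcongr <;> norm_num; linarith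
    _ = 2 ^ (1 / 2 : ℝ) * 2 ^ ν := by rw [Real.rpow_add two_pos, mul_comm]
    _ ≤ 2 * 2 ^ ν := by
        gcongr
        exact Real.rpow_le_self_of_one_le one_le_two (by norm_num)

/-- There is an absolute constant `C` such that for all `ν ≥ 1/2` and `r ≥ 2ν`, the
integral `∫_0^∞ e^{-t} t^{ν-1/2} (1 + it/(2r))^{ν-1/2} dt` converges absolutely and
`(1/Γ(ν+1/2)) ∫_0^∞ e^{-t} t^{ν-1/2} |(1 + it/(2r))^{ν-1/2}| dt ≤ C · 2^ν`. -/
theorem macdonald_integral_bound :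
    ∃ C : ℝ, 0 < C ∧ ∀ ν r : ℝ, 1 / 2 ≤ ν → 2 * ν ≤ r →
      IntegrableOn (fun t : ℝ =>
          ((Real.exp (-t) * t ^ (ν - 1 / 2) : ℝ) : ℂ) *
            (1 + Complex.I * (t : ℂ) / (2 * (r : ℂ))) ^ ((ν : ℂ) - 1 / 2))
        (Set.Ioi 0) volume ∧
      (1 / Real.Gamma (ν + 1 / 2)) *
          (∫ t in Set.Ioi (0 : ℝ), Real.exp (-t) * t ^ (ν - 1 / 2) *
            ‖(1 + Complex.I * (t : ℂ) / (2 * (r : ℂ))) ^ ((ν : ℂ) - 1 / 2)‖) ≤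
        C * 2 ^ ν := by
  refine ⟨2, two_pos, fun ν r hν hr => ⟨?_, ?_⟩⟩
  · refine (integrableOn_rpow_mul_exp_neg_mul_Ioi (a := ν + 1 / 2) (r := 3 / 4)
        (by linarith) (by norm_num)).mono' (by fun_prop : Measurable _).aestronglyMeasurable ?_
    filter_upwards [ae_restrict_mem measurableSet_Ioi] with t ht
    rw [norm_macdonald_integrand ht]
    exact macdonald_integrand_le hν hr (le_of_lt ht)
  · have hΓ : 0 < Real.Gamma (ν + 1 / 2) := Real.Gamma_pos_of_pos (by linarith)
    have hint : ∫ t in Ioi (0 : ℝ), Real.exp (-t) * t ^ (ν - 1 / 2) *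
          ‖(1 + Complex.I * (t : ℂ) / (2 * (r : ℂ))) ^ ((ν : ℂ) - 1 / 2)‖ ≤
        (1 / (3 / 4)) ^ (ν + 1 / 2) * Real.Gamma (ν + 1 / 2) := by
      rw [← Real.integral_rpow_mul_exp_neg_mul_Ioi (by linarith) (by norm_num)]
      refine integral_mono_of_nonneg ?_
        (integrableOn_rpow_mul_exp_neg_mul_Ioi (by linarith) (by norm_num)) ?_
      · filter_upwards [ae_restrict_mem measurableSet_Ioi] with t (ht : 0 < t)
        positivity
      · filter_upwards [ae_restrict_mem measurableSet_Ioi] with t ht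
        exact macdonald_integrand_le hν hr (le_of_lt ht)
    rw [one_div, inv_mul_le_iff₀ hΓ, mul_comm (Real.Gamma _)]
    refine hint.trans ?_
    gcongr
    exact four_thirds_rpow_add_half_le (by linarith)
end

section
/- For every N ∈ ℕ there is a constant C_N independent of ν such that for all ν ≥ 1/2 and all r ≥ 2ν: (1/Γ(ν+1/2)) · | (∂/∂r)^N ∫_0^∞ e^{-t} t^{ν-1/2} (1 + it/(2r))^{ν-1/2} dt | ≤ C_N · 2^ν · (ν/r)^N, where (ν/r)^0 is interpreted as 1. -/
/-!
With `μ = ν - 1/2`, the integral is the restriction to the real axis of a function `F(z)` that is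
holomorphic for `Re z > μ/2`, because `‖(1 + it/(2z))^μ‖ ≤ e^{μt/(2 Re z)}` dominates the integrand
locally uniformly. On the disc of radius `r/2` about `r` we have `Re z ≥ ν > μ`, so this factor is at
most `e^{t/2}` and `‖F‖ ≤ ∫ t^μ e^{-t/2} dt = 2^{ν+1/2} Γ(ν+1/2)`. Cauchy's estimate on that disc
gives `N! 2^{ν+1/2} Γ(ν+1/2) (2/r)^N`, and `2/r ≤ 4ν/r`.
-/

open MeasureTheory Metric Set Filter Topology

theorem aestronglyMeasurable_deriv_of_eventually {𝕜 α E : Type*} [NontriviallyNormedField 𝕜]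
    [MeasurableSpace α] {μ : Measure α} [NormedAddCommGroup E] [NormedSpace 𝕜 E]
    {f : 𝕜 → α → E} {x₀ : 𝕜} (hf_meas : ∀ᶠ x in 𝓝 x₀, AEStronglyMeasurable (f x) μ)
    (hf_diff : ∀ᵐ t ∂μ, DifferentiableAt 𝕜 (f · t) x₀) :
    AEStronglyMeasurable (fun t => deriv (f · t) x₀) μ := by
  obtain ⟨v, hv⟩ := (𝓝[≠] (0 : 𝕜)).exists_seq_tendsto
  have hv_meas : ∀ᶠ n in atTop, AEStronglyMeasurable (f (x₀ + v n)) μ := by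
    have : Tendsto (fun n => x₀ + v n) atTop (𝓝 x₀) := by
      simpa using tendsto_const_nhds.add (tendsto_nhds_of_tendsto_nhdsWithin hv)
    exact this.eventually hf_meas
  obtain ⟨N, hN⟩ := eventually_atTop.1 hv_meas
  refine aestronglyMeasurable_of_tendsto_ae atTop
    (f := fun n t => (v (n + N))⁻¹ • (f (x₀ + v (n + N)) t - f x₀ t))
    (fun n => ((hN _ (Nat.le_add_left N n)).sub hf_meas.self_of_nhds).const_smul _) ?_
  filter_upwards [hf_diff] with t ht
  exact (hasDerivAt_iff_tendsto_slope_zero.1 ht.hasDerivAt).comp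
    ((tendsto_add_atTop_iff_nat N).2 hv)

theorem differentiableOn_integral_of_locally_dominated {α E : Type*} [MeasurableSpace α]
    {μ : Measure α} [NormedAddCommGroup E] [NormedSpace ℂ E] {f : ℂ → α → E} {U : Set ℂ}
    (hU : IsOpen U) (hf_meas : ∀ z ∈ U, AEStronglyMeasurable (f z) μ)
    (hf_diff : ∀ᵐ t ∂μ, DifferentiableOn ℂ (f · t) U)
    (hf_bound : ∀ z₀ ∈ U, ∃ K ∈ 𝓝 z₀, ∃ bound : α → ℝ, Integrable bound μ ∧
      ∀ᵐ t ∂μ, ∀ z ∈ K, ‖f z t‖ ≤ bound t) :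
    DifferentiableOn ℂ (fun z => ∫ t, f z t ∂μ) U := by
  intro z₀ hz₀
  obtain ⟨K, hK, bound, hbound_int, hbound⟩ := hf_bound z₀ hz₀
  obtain ⟨δ, hδ, hδUK⟩ := Metric.mem_nhds_iff.1 (inter_mem (hU.mem_nhds hz₀) hK)
  set ε := δ / 3 with hε_def
  have hε : 0 < ε := by positivity
  have hsub : ∀ z ∈ ball z₀ ε, closedBall z ε ⊆ U ∩ K := fun z hz w hw =>
    hδUK <| calc dist w z₀ ≤ dist w z + dist z z₀ := dist_triangle _ _ _
      _ < δ := by linarith [mem_closedBall.1 hw, mem_ball.1 hz, hε_def]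
  -- Cauchy's estimate turns the bound on `f` into a bound on its derivative.
  have hderiv_bound : ∀ᵐ t ∂μ, ∀ z ∈ ball z₀ ε, ‖deriv (f · t) z‖ ≤ bound t / ε := by
    filter_upwards [hf_diff, hbound] with t hdt hbt z hz
    exact Complex.norm_deriv_le_of_forall_mem_sphere_norm_le hε
      (hdt.diffContOnCl_ball ((hsub z hz).trans inter_subset_left))
      fun w hw => hbt w ((hsub z hz) (sphere_subset_closedBall hw)).2
  have hz₀U : U ∈ 𝓝 z₀ := hU.mem_nhds hz₀
  refine (hasDerivAt_integral_of_dominated_loc_of_deriv_le (ball_mem_nhds z₀ hε)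
    (eventually_of_mem hz₀U hf_meas)
    (hbound_int.mono' (hf_meas z₀ hz₀) (hbound.mono fun t ht => ht z₀ (mem_of_mem_nhds hK)))
    (aestronglyMeasurable_deriv_of_eventually (eventually_of_mem hz₀U hf_meas)
      (hf_diff.mono fun t ht => ht.differentiableAt hz₀U))
    hderiv_bound (hbound_int.div_const ε) ?_).2.differentiableAt.differentiableWithinAt
  filter_upwards [hf_diff] with t ht z hz
  exact (ht.differentiableAt (hU.mem_nhds ((hsub z hz) (mem_closedBall_self hε.le)).1)).hasDerivAt

theorem iteratedDeriv_ofReal_comp {f : ℂ → ℂ} {U : Set ℂ} (hU : IsOpen U)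
    (hf : DifferentiableOn ℂ f U) (n : ℕ) {x : ℝ} (hx : (x : ℂ) ∈ U) :
    iteratedDeriv n (fun y : ℝ => f y) x = iteratedDeriv n f x := by
  induction n generalizing x with
  | zero => simp
  | succ n ih =>
    have hrestrict : (fun y : ℝ => iteratedDeriv n (fun y : ℝ => f y) y) =ᶠ[𝓝 x]
        fun y : ℝ => iteratedDeriv n f y := by
      filter_upwards [(hU.preimage Complex.continuous_ofReal).mem_nhds hx] with y hy using ih hy
    have hdiff : DifferentiableAt ℂ (iteratedDeriv n f) x := by
      rw [iteratedDeriv_eq_iterate]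
      exact ((hf.analyticOnNhd hU).iterated_deriv n x hx).differentiableAt
    rw [iteratedDeriv_succ, iteratedDeriv_succ, hrestrict.deriv_eq]
    exact hdiff.hasDerivAt.comp_ofReal.deriv

theorem Complex.sub_le_re_of_mem_closedBall {c z : ℂ} {ρ : ℝ} (hz : z ∈ closedBall c ρ) :
    c.re - ρ ≤ z.re := by
  have h := (Complex.abs_re_le_norm (z - c)).trans (mem_closedBall_iff_norm.1 hz)
  rw [Complex.sub_re] at h
  linarith [(abs_le.1 h).1]

noncomputable section

def macdonaldIntegrand (μ : ℝ) (z : ℂ) (t : ℝ) : ℂ :=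
  ((Real.exp (-t) * t ^ μ : ℝ) : ℂ) * (1 + Complex.I * (t : ℂ) / (2 * z)) ^ (μ : ℂ)

def macdonaldIntegral (μ : ℝ) (z : ℂ) : ℂ :=
  ∫ t in Ioi 0, macdonaldIntegrand μ z t

lemma im_one_add_I_mul_div_pos {z : ℂ} (hz : 0 < z.re) {t : ℝ} (ht : 0 < t) :
    0 < (1 + Complex.I * t / (2 * z)).im := by
  have hz0 : 0 < Complex.normSq z := Complex.normSq_pos.2 fun h => by simp [h] at hz
  simp [Complex.div_im, Complex.normSq_mul]
  positivity

lemma norm_one_add_I_mul_div_le_exp {z : ℂ} {a : ℝ} (ha : 0 < a) (hz : a ≤ ‖z‖) {t : ℝ}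
    (ht : 0 ≤ t) : ‖1 + Complex.I * t / (2 * z)‖ ≤ Real.exp (t / (2 * a)) :=
  calc ‖1 + Complex.I * t / (2 * z)‖ ≤ 1 + t / (2 * ‖z‖) := by
        refine (norm_add_le _ _).trans_eq ?_
        simp [abs_of_nonneg ht]
    _ ≤ t / (2 * a) + 1 := by rw [add_comm]; gcongr
    _ ≤ Real.exp (t / (2 * a)) := Real.add_one_le_exp _

lemma norm_macdonaldIntegrand_le {μ a : ℝ} (hμ : 0 ≤ μ) (ha : 0 < a) {z : ℂ} (hz : a ≤ z.re)
    {t : ℝ} (ht : 0 < t) :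
    ‖macdonaldIntegrand μ z t‖ ≤ t ^ μ * Real.exp (-((1 - μ / (2 * a)) * t)) := by
  have hpow : ‖1 + Complex.I * t / (2 * z)‖ ^ μ ≤ Real.exp (t / (2 * a) * μ) := by
    rw [Real.exp_mul]
    gcongr
    exact norm_one_add_I_mul_div_le_exp ha (hz.trans (Complex.re_le_norm z)) ht.le
  calc ‖macdonaldIntegrand μ z t‖
      = Real.exp (-t) * t ^ μ * ‖1 + Complex.I * t / (2 * z)‖ ^ μ := by
        rw [macdonaldIntegrand, norm_mul, Complex.norm_cpow_real, Complex.norm_real,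
          Real.norm_of_nonneg (by positivity)]
    _ ≤ Real.exp (-t) * t ^ μ * Real.exp (t / (2 * a) * μ) := by gcongr
    _ = t ^ μ * Real.exp (-((1 - μ / (2 * a)) * t)) := by
        rw [mul_comm (Real.exp _), mul_assoc, ← Real.exp_add]
        ring_nf

lemma continuousOn_macdonaldIntegrand (μ : ℝ) {z : ℂ} (hz : 0 < z.re) :
    ContinuousOn (macdonaldIntegrand μ z) (Ioi 0) := by
  intro t ht
  apply ContinuousAt.continuousWithinAt
  unfold macdonaldIntegrand
  apply ContinuousAt.mul
  · exact Complex.continuous_ofReal.continuousAt.comp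
      ((Real.continuous_exp.comp continuous_neg).continuousAt.mul
        (Real.continuousAt_rpow_const _ _ (Or.inl (ne_of_gt ht))))
  · exact ContinuousAt.cpow (by fun_prop) continuousAt_const
      (Or.inr (im_one_add_I_mul_div_pos hz ht).ne')

lemma differentiableAt_macdonaldIntegrand (μ : ℝ) {z : ℂ} (hz : 0 < z.re) {t : ℝ}
    (ht : 0 < t) : DifferentiableAt ℂ (macdonaldIntegrand μ · t) z := by
  have hz0 : z ≠ 0 := fun h => by simp [h] at hz
  unfold macdonaldIntegrand
  apply DifferentiableAt.const_mul
  apply DifferentiableAt.cpow_const (by fun_prop (disch := simpa))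
  exact Or.inr (im_one_add_I_mul_div_pos hz ht).ne'

lemma integrableOn_rpow_mul_exp_neg_mul {s b : ℝ} (hs : -1 < s) (hb : 0 < b) :
    IntegrableOn (fun t : ℝ => t ^ s * Real.exp (-(b * t))) (Ioi 0) := by
  simpa using integrableOn_rpow_mul_exp_neg_mul_rpow hs zero_lt_one hb

lemma differentiableOn_macdonaldIntegral {μ : ℝ} (hμ : 0 ≤ μ) :
    DifferentiableOn ℂ (macdonaldIntegral μ) {z | μ / 2 < z.re} := by
  have hre : ∀ {z : ℂ}, μ / 2 < z.re → 0 < z.re := fun hz => by linarith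
  refine differentiableOn_integral_of_locally_dominated
    (isOpen_lt continuous_const Complex.continuous_re)
    (fun z hz => (continuousOn_macdonaldIntegrand μ (hre hz)).aestronglyMeasurable
      measurableSet_Ioi) ?_ fun z₀ hz₀ => ?_
  · filter_upwards [ae_restrict_mem measurableSet_Ioi] with t ht z hz
    exact (differentiableAt_macdonaldIntegrand μ (hre hz) ht).differentiableWithinAt
  · set a := (μ / 2 + z₀.re) / 2 with ha_def
    have hz₀ : μ / 2 < z₀.re := hz₀
    have ha : 0 < a := by linarith
    refine ⟨{z | a < z.re}, (isOpen_lt continuous_const Complex.continuous_re).mem_nhds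
      (show a < z₀.re by linarith), _,
      integrableOn_rpow_mul_exp_neg_mul (s := μ) (b := 1 - μ / (2 * a)) (by linarith)
        (by rw [sub_pos, div_lt_one (by positivity)]; linarith), ?_⟩
    filter_upwards [ae_restrict_mem measurableSet_Ioi] with t ht z hz
    exact norm_macdonaldIntegrand_le hμ ha (le_of_lt hz) ht

lemma norm_macdonaldIntegral_le {μ : ℝ} (hμ : 0 ≤ μ) {z : ℂ} (hz : 0 < z.re) (hμz : μ ≤ z.re) :
    ‖macdonaldIntegral μ z‖ ≤ 2 ^ (μ + 1) * Real.Gamma (μ + 1) := by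
  have hbound : ∀ t ∈ Ioi (0 : ℝ),
      ‖macdonaldIntegrand μ z t‖ ≤ t ^ (μ + 1 - 1) * Real.exp (-(1 / 2 * t)) := fun t ht => by
    have ht : 0 < t := ht
    refine (norm_macdonaldIntegrand_le hμ hz le_rfl ht).trans ?_
    have : μ / (2 * z.re) ≤ 1 / 2 := by rw [div_le_iff₀ (by positivity)]; linarith
    rw [add_sub_cancel_right]
    gcongr
    nlinarith
  calc ‖macdonaldIntegral μ z‖
      ≤ ∫ t in Ioi 0, t ^ (μ + 1 - 1) * Real.exp (-(1 / 2 * t)) :=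
        norm_integral_le_of_norm_le
          (integrableOn_rpow_mul_exp_neg_mul (by linarith) (by norm_num))
          ((ae_restrict_iff' measurableSet_Ioi).2 (.of_forall hbound))
    _ = 2 ^ (μ + 1) * Real.Gamma (μ + 1) := by
        rw [Real.integral_rpow_mul_exp_neg_mul_Ioi (by linarith) (by norm_num)]
        norm_num

lemma norm_iteratedDeriv_macdonaldIntegral_le {μ r : ℝ} (hμ : 0 ≤ μ) (hr : 0 < r)
    (hμr : 2 * μ ≤ r) (N : ℕ) :
    ‖iteratedDeriv N (macdonaldIntegral μ) r‖ ≤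
      N.factorial * (2 ^ (μ + 1) * Real.Gamma (μ + 1)) / (r / 2) ^ N := by
  have hre : ∀ z ∈ closedBall (r : ℂ) (r / 2), r / 2 ≤ z.re := fun z hz => by
    have h := Complex.sub_le_re_of_mem_closedBall hz
    rw [Complex.ofReal_re] at h
    linarith
  have hball : closedBall (r : ℂ) (r / 2) ⊆ {z | μ / 2 < z.re} := fun z hz => by
    show μ / 2 < z.re
    linarith [hre z hz]
  exact Complex.norm_iteratedDeriv_le_of_forall_mem_sphere_norm_le N (by positivity)
    ((differentiableOn_macdonaldIntegral hμ).diffContOnCl_ball hball) fun z hz =>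
      norm_macdonaldIntegral_le hμ (by linarith [hre z (sphere_subset_closedBall hz)])
        (by linarith [hre z (sphere_subset_closedBall hz)])

lemma iteratedDeriv_macdonaldIntegral_ofReal {μ r : ℝ} (hμ : 0 ≤ μ) (hμr : μ < r) (N : ℕ) :
    iteratedDeriv N (fun x : ℝ => macdonaldIntegral μ x) r =
      iteratedDeriv N (macdonaldIntegral μ) r :=
  iteratedDeriv_ofReal_comp (isOpen_lt continuous_const Complex.continuous_re)
    (differentiableOn_macdonaldIntegral hμ) N (show μ / 2 < (r : ℂ).re by simp; linarith)

end

/-- For every `N ∈ ℕ` there is a constant `C_N` independent of `ν` such that for all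
`ν ≥ 1/2` and `r ≥ 2ν`:
`(1/Γ(ν+1/2)) |(∂/∂r)^N ∫_0^∞ e^{-t} t^{ν-1/2} (1 + it/(2r))^{ν-1/2} dt| ≤ C_N 2^ν (ν/r)^N`,
where `(ν/r)^0 = 1`. -/
theorem macdonald_integral_deriv_bound (N : ℕ) :
    ∃ C : ℝ, 0 < C ∧ ∀ ν r : ℝ, 1 / 2 ≤ ν → 2 * ν ≤ r →
      (1 / Real.Gamma (ν + 1 / 2)) *
          ‖iteratedDeriv N (fun x : ℝ =>
            ∫ t in Set.Ioi (0 : ℝ),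
              ((Real.exp (-t) * t ^ (ν - 1 / 2) : ℝ) : ℂ) *
                (1 + Complex.I * (t : ℂ) / (2 * (x : ℂ))) ^ ((ν : ℂ) - 1 / 2)) r‖ ≤
        C * 2 ^ ν * (ν / r) ^ N := by
  refine ⟨N.factorial * √2 * 4 ^ N, by positivity, fun ν r hν hνr => ?_⟩
  have hμ : 0 ≤ ν - 1 / 2 := by linarith
  have hr : 0 < r := by linarith
  have hΓ : 0 < Real.Gamma (ν + 1 / 2) := Real.Gamma_pos_of_pos (by linarith)
  have hcauchy := norm_iteratedDeriv_macdonaldIntegral_le hμ hr (by linarith) N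
  rw [show ν - 1 / 2 + 1 = ν + 1 / 2 by ring] at hcauchy
  have hfun : (fun x : ℝ => ∫ t in Set.Ioi (0 : ℝ),
      ((Real.exp (-t) * t ^ (ν - 1 / 2) : ℝ) : ℂ) *
        (1 + Complex.I * (t : ℂ) / (2 * (x : ℂ))) ^ ((ν : ℂ) - 1 / 2)) =
      fun x : ℝ => macdonaldIntegral (ν - 1 / 2) x := by
    funext x
    simp only [macdonaldIntegral, macdonaldIntegrand, Complex.ofReal_sub, Complex.ofReal_div,
      Complex.ofReal_one, Complex.ofReal_ofNat]
  rw [hfun, iteratedDeriv_macdonaldIntegral_ofReal hμ (by linarith)]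
  calc 1 / Real.Gamma (ν + 1 / 2) * ‖iteratedDeriv N (macdonaldIntegral (ν - 1 / 2)) r‖
      ≤ 1 / Real.Gamma (ν + 1 / 2) *
          (N.factorial * (2 ^ (ν + 1 / 2) * Real.Gamma (ν + 1 / 2)) / (r / 2) ^ N) := by
        gcongr
    _ = N.factorial * √2 * 2 ^ ν * (2 / r) ^ N := by
        rw [Real.rpow_add two_pos, ← Real.sqrt_eq_rpow, div_pow, div_pow]
        field_simp
    _ ≤ N.factorial * √2 * 2 ^ ν * (4 * (ν / r)) ^ N := by
        gcongr
        rw [mul_div_assoc']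
        gcongr
        linarith
    _ = N.factorial * √2 * 4 ^ N * 2 ^ ν * (ν / r) ^ N := by ring
end

section
/- Let n ≥ 1 and N ≥ 0 be integers, let k ∈ ℤ, and let φ : ℝ → ℂ be a smooth function with support contained in [1/2, 2]. Let R ≥ 0 and M > 0, and suppose B : (0,∞) → ℂ is N-times continuously differentiable on [2^{k-1}, 2^{k+1}] with |B^{(α)}(λ)| ≤ M λ^{-α} (1+λR)^{-(n+1)/2} for all integers 0 ≤ α ≤ N and all λ ∈ [2^{k-1}, 2^{k+1}]. Then there is a constant C depending only on n, N and φ such that for every t ∈ ℝ: | ∫_0^∞ e^{itλ} φ(2^{-k}λ) B(λ) λ^{n-1} dλ | ≤ C M · 2^{kn} · (1+2^k|t|)^{-N} · (1+2^k R)^{-(n+1)/2}. -/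
open MeasureTheory Set Filter Topology Real Complex FourierTransform

set_option maxHeartbeats 1000000

lemma zero_outside {a b : ℝ} {u : ℝ → ℂ} (hu : Continuous u)
    (hsupp : Function.support u ⊆ Set.Icc a b) :
    ∀ x : ℝ, x ∉ Set.Ioo a b → u x = 0 := by
  have hIic : Iic a ⊆ u ⁻¹' {0} := by
    rw [← closure_Iio]
    refine closure_minimal ?_ (isClosed_singleton.preimage hu)
    intro y hy
    simp only [mem_preimage, mem_singleton_iff]
    by_contra h
    have := hsupp h
    simp only [mem_Icc] at this
    exact absurd this.1 (by linarith [mem_Iio.mp hy])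
  have hIci : Ici b ⊆ u ⁻¹' {0} := by
    rw [← closure_Ioi]
    refine closure_minimal ?_ (isClosed_singleton.preimage hu)
    intro y hy
    simp only [mem_preimage, mem_singleton_iff]
    by_contra h
    have := hsupp h
    simp only [mem_Icc] at this
    exact absurd this.2 (by linarith [mem_Ioi.mp hy])
  intro x hx
  rcases not_and_or.mp hx with h | h
  · exact hIic (mem_Iic.mpr (not_lt.mp h))
  · exact hIci (mem_Ici.mpr (not_lt.mp h))

lemma glue_mul {a b : ℝ} (hab : a < b) (m : ℕ) :
    ∀ (u h : ℝ → ℂ), ContDiff ℝ (m : ℕ) u →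
      Function.support u ⊆ Set.Icc a b → ContDiffOn ℝ (m : ℕ) h (Set.Icc a b) →
      ContDiff ℝ (m : ℕ) (fun x => u x * h x) := by
  induction m with
  | zero =>
    intro u h hu hsupp hh
    have hu0 := zero_outside hu.continuous hsupp
    obtain ⟨C0, hC0⟩ := isCompact_Icc.exists_bound_of_continuousOn hh.continuousOn
    have hbd : ∀ y, ‖u y * h y‖ ≤ max C0 0 * ‖u y‖ := by
      intro y
      by_cases hy : y ∈ Set.Icc a b
      · rw [norm_mul, mul_comm]
        exact mul_le_mul ((hC0 y hy).trans (le_max_left _ _)) le_rfl (norm_nonneg _)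
          (le_max_right _ _)
      · have : u y = 0 := Function.notMem_support.mp fun h' => hy (hsupp h')
        simp [this]
    rw [show ((0 : ℕ) : WithTop ℕ∞) = 0 from rfl, contDiff_zero]
    rw [continuous_iff_continuousAt]
    intro x
    by_cases hx : x ∈ Set.Ioo a b
    · exact (hu.continuous.continuousAt).mul
        (hh.continuousOn.continuousAt (Icc_mem_nhds hx.1 hx.2))
    · have hux : u x = 0 := hu0 x hx
      have : Tendsto (fun y => u y * h y) (𝓝 x) (𝓝 0) := by
        apply squeeze_zero_norm hbd
        have := (hu.continuous.norm.tendsto x).const_mul (max C0 0)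
        rw [hux, norm_zero, mul_zero] at this
        exact this
      have h2 : (fun x => u x * h x) x = 0 := by simp [hux]
      unfold ContinuousAt
      rw [h2]
      exact this
  | succ m IH =>
    intro u h hu hsupp hh
    have h1 : (((m : ℕ) : WithTop ℕ∞) + 1) = ((m + 1 : ℕ) : WithTop ℕ∞) := by norm_cast
    have hone : (1 : WithTop ℕ∞) ≤ ((m + 1 : ℕ) : WithTop ℕ∞) := by
      exact_mod_cast Nat.succ_le_succ (Nat.zero_le m)
    have hu' : Differentiable ℝ u := hu.differentiable (by exact_mod_cast Nat.succ_ne_zero m)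
    have hderivu : ContDiff ℝ (m : ℕ) (deriv u) := by
      rw [← h1] at hu
      exact (contDiff_succ_iff_deriv.mp hu).2.2
    have hsupp' : Function.support (deriv u) ⊆ Set.Icc a b := by
      intro x hx
      by_contra h'
      apply hx
      have hev : u =ᶠ[𝓝 x] fun _ => (0 : ℂ) := by
        refine eventually_of_mem ((isClosed_Icc.isOpen_compl).mem_nhds h') ?_
        intro y hy
        exact Function.notMem_support.mp (fun hs => hy (hsupp hs))
      rw [hev.deriv_eq]
      simp
    have hu0 := zero_outside hu.continuous hsupp
    have hdu0 := zero_outside hderivu.continuous hsupp'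
    obtain ⟨C0, hC0⟩ := isCompact_Icc.exists_bound_of_continuousOn hh.continuousOn
    have hbd : ∀ y, ‖u y * h y‖ ≤ max C0 0 * ‖u y‖ := by
      intro y
      by_cases hy : y ∈ Set.Icc a b
      · rw [norm_mul, mul_comm]
        exact mul_le_mul ((hC0 y hy).trans (le_max_left _ _)) le_rfl (norm_nonneg _)
          (le_max_right _ _)
      · have : u y = 0 := Function.notMem_support.mp fun h' => hy (hsupp h')
        simp [this]
    set D : ℝ → ℂ := fun x => deriv u x * h x + u x * derivWithin h (Set.Icc a b) x with hDdef
    have hD : ∀ x, HasDerivAt (fun y => u y * h y) (D x) x := by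
      intro x
      by_cases hx : x ∈ Set.Ioo a b
      · have hmem : Set.Icc a b ∈ 𝓝 x := Icc_mem_nhds hx.1 hx.2
        have hhd : DifferentiableAt ℝ h x :=
          (hh.contDiffAt hmem).differentiableAt (by exact_mod_cast Nat.succ_ne_zero m)
        have e1 : derivWithin h (Set.Icc a b) x = deriv h x :=
          hhd.derivWithin ((uniqueDiffOn_Icc hab) x ⟨hx.1.le, hx.2.le⟩)
        have := (hu'.differentiableAt.hasDerivAt).mul hhd.hasDerivAt
        simp only [hDdef, e1]; exact this
      · have hux : u x = 0 := hu0 x hx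
        have hdux : deriv u x = 0 := hdu0 x hx
        have hDx : D x = 0 := by simp [hDdef, hux, hdux]
        rw [hDx]
        have hud : HasDerivAt u 0 x := by
          rw [← hdux]; exact hu'.differentiableAt.hasDerivAt
        rw [hasDerivAt_iff_isLittleO] at hud ⊢
        simp only [hux, sub_zero, smul_zero, zero_mul] at hud ⊢
        have hbig : (fun x' => u x' * h x') =O[𝓝 x] u :=
          Asymptotics.IsBigO.of_bound (max C0 0) (Filter.Eventually.of_forall hbd)
        exact hbig.trans_isLittleO hud
    have hDeq : deriv (fun y => u y * h y) = D := funext fun x => (hD x).deriv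
    have hdiff : Differentiable ℝ (fun y => u y * h y) := fun x => (hD x).differentiableAt
    rw [← h1, contDiff_succ_iff_deriv]
    refine ⟨hdiff, ?_, ?_⟩
    · intro hω
      exact absurd hω (by exact_mod_cast WithTop.natCast_ne_top m)
    · rw [hDeq]
      have hle : ((m : ℕ) : WithTop ℕ∞) ≤ ((m + 1 : ℕ) : WithTop ℕ∞) := by
        exact_mod_cast Nat.le_succ m
      exact (IH _ _ hderivu hsupp' (hh.of_le hle)).add
        (IH _ _ (hu.of_le hle) hsupp
          (hh.derivWithin (uniqueDiffOn_Icc hab) (le_of_eq h1)))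

lemma iteratedDeriv_zero_outside {g : ℝ → ℂ} {a b : ℝ}
    (hsupp : Function.support g ⊆ Set.Icc a b) (m : ℕ) (x : ℝ) (hx : x ∉ Set.Icc a b) :
    iteratedDeriv m g x = 0 := by
  have hev : g =ᶠ[𝓝 x] (fun _ => (0 : ℂ)) := by
    refine eventually_of_mem ((isClosed_Icc.isOpen_compl).mem_nhds hx) ?_
    intro y hy
    exact Function.notMem_support.mp fun hs => hy (hsupp hs)
  rw [hev.iteratedDeriv_eq m]
  have : (fun _ : ℝ => (0 : ℂ)) = (fun _ : ℝ => (0 : ℂ)) := rfl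
  rw [show (fun _ : ℝ => (0 : ℂ)) = (0 : ℝ → ℂ) from rfl]
  rw [iteratedDeriv_eq_iteratedFDeriv]
  rw [show (0 : ℝ → ℂ) = (fun _ : ℝ => (0 : ℂ)) from rfl, iteratedFDeriv_zero_fun]
  simp

lemma core_decay (N : ℕ) (g : ℝ → ℂ) (hg : ContDiff ℝ (N : ℕ) g)
    (hsupp : Function.support g ⊆ Set.Icc (1/2 : ℝ) 2)
    (A : ℝ) (hA0 : 0 ≤ A)
    (hA : ∀ α : ℕ, α ≤ N → ∀ x ∈ Set.Icc (1/2 : ℝ) 2, ‖iteratedDeriv α g x‖ ≤ A) (s : ℝ) :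
    ‖∫ x : ℝ, Complex.exp (Complex.I * s * x) * g x‖ ≤
      2 ^ N * (3/2) * A * (1 + |s|) ^ (-(N : ℝ)) := by
  have hcs : HasCompactSupport g :=
    HasCompactSupport.intro isCompact_Icc fun x hx => Function.notMem_support.mp fun hs => hx (hsupp hs)
  -- integrability and L¹ bounds of iterated derivatives
  have hint : ∀ m : ℕ, m ≤ N → Integrable (iteratedDeriv m g) := by
    intro m hm
    have hc : Continuous (iteratedDeriv m g) := hg.continuous_iteratedDeriv m (by exact_mod_cast hm)
    have hcs' : HasCompactSupport (iteratedDeriv m g) := by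
      rw [iteratedDeriv_eq_equiv_comp]
      exact (hcs.iteratedFDeriv m).comp_left (by simp)
    exact hc.integrable_of_hasCompactSupport hcs'
  have hL1 : ∀ m : ℕ, m ≤ N → ∫ x : ℝ, ‖iteratedDeriv m g x‖ ≤ (3/2) * A := by
    intro m hm
    have hle : ∀ x : ℝ, ‖iteratedDeriv m g x‖ ≤
        Set.indicator (Set.Icc (1/2 : ℝ) 2) (fun _ => A) x := by
      intro x
      by_cases hx : x ∈ Set.Icc (1/2 : ℝ) 2
      · rw [Set.indicator_of_mem hx]; exact hA m hm x hx
      · rw [Set.indicator_of_notMem hx, iteratedDeriv_zero_outside hsupp m x hx, norm_zero]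
    have h1 : ∫ x : ℝ, ‖iteratedDeriv m g x‖ ≤
        ∫ x : ℝ, Set.indicator (Set.Icc (1/2 : ℝ) 2) (fun _ => A) x := by
      refine integral_mono (hint m hm).norm ?_ hle
      exact (integrable_indicator_iff measurableSet_Icc).mpr ((integrableOn_const_iff (C := A)).mpr (Or.inr (by
        rw [Real.volume_Icc]; exact ENNReal.ofReal_lt_top)))
    refine h1.trans ?_
    rw [integral_indicator_const _ measurableSet_Icc]
    rw [measureReal_def, Real.volume_Icc]
    rw [smul_eq_mul, mul_comm]
    rw [ENNReal.toReal_ofReal (by norm_num)]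
    norm_num [mul_comm]
  -- the integral is a Fourier integral
  set w : ℝ := -(s / (2 * π)) with hw
  have key : (∫ x : ℝ, Complex.exp (Complex.I * s * x) * g x) = 𝓕 g w := by
    rw [Real.fourier_real_eq_integral_exp_smul]
    congr 1
    funext v
    rw [smul_eq_mul]
    congr 2
    have hπ : (π : ℝ) ≠ 0 := Real.pi_ne_zero
    have : (-2 * π * v * w : ℝ) = s * v := by
      rw [hw]; field_simp
    rw [this]
    push_cast
    ring
  -- Fourier transform of N-th derivative
  have hgN : ContDiff ℝ ((N : ℕ∞) : WithTop ℕ∞) g := by exact_mod_cast hg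
  have hFT := Real.fourier_iteratedDeriv (N := (N : ℕ∞)) hgN
    (fun m hm => hint m (by exact_mod_cast hm)) (le_refl (N : ℕ∞))
  have hnorm0 : ‖𝓕 g w‖ ≤ (3/2) * A := by
    refine le_trans (VectorFourier.norm_fourierIntegral_le_integral_norm _ _ _ _ _) ?_
    simpa using hL1 0 (Nat.zero_le N)
  have hnormN : |s| ^ N * ‖𝓕 g w‖ ≤ (3/2) * A := by
    have h2 : ‖𝓕 (iteratedDeriv N g) w‖ ≤ (3/2) * A := by
      refine le_trans (VectorFourier.norm_fourierIntegral_le_integral_norm _ _ _ _ _) ?_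
      exact hL1 N le_rfl
    have h3 : 𝓕 (iteratedDeriv N g) w = (2 * π * Complex.I * w) ^ N • 𝓕 g w := by
      rw [hFT]
    rw [h3] at h2
    rw [norm_smul, norm_pow] at h2
    have h4 : ‖(2 * π * Complex.I * (w : ℂ))‖ = |s| := by
      simp only [norm_mul, Complex.norm_I, Complex.norm_ofNat, Complex.norm_real]
      rw [hw]
      rw [Real.norm_eq_abs, Real.norm_eq_abs, abs_neg, abs_div, abs_of_pos Real.pi_pos]
      rw [abs_of_pos Real.two_pi_pos]
      field_simp
    rw [h4] at h2
    exact h2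
  rw [key]
  -- now combine the two bounds
  have hpos : (0 : ℝ) < 1 + |s| := by positivity
  have hrw : (1 + |s|) ^ (-(N : ℝ)) = ((1 + |s|) ^ N)⁻¹ := by
    rw [← Real.rpow_natCast (1 + |s|) N, ← Real.rpow_neg hpos.le]
  rw [hrw]
  rw [mul_assoc, mul_assoc]
  rw [← mul_assoc (3/2 : ℝ)]
  have hFnn : (0 : ℝ) ≤ ‖𝓕 g w‖ := norm_nonneg _
  have hkey : ‖𝓕 g w‖ * (1 + |s|) ^ N ≤ 2 ^ N * (3/2 * A) := by
    rcases le_total |s| 1 with hs | hs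
    · calc ‖𝓕 g w‖ * (1 + |s|) ^ N ≤ (3/2 * A) * 2 ^ N := by
            refine mul_le_mul hnorm0 (pow_le_pow_left₀ (by positivity) (by linarith) N) (by positivity) (by positivity)
          _ = 2 ^ N * (3/2 * A) := by ring
    · calc ‖𝓕 g w‖ * (1 + |s|) ^ N ≤ ‖𝓕 g w‖ * (2 * |s|) ^ N := by
            refine mul_le_mul_of_nonneg_left (pow_le_pow_left₀ (by positivity) (by linarith) N) hFnn
          _ = 2 ^ N * (|s| ^ N * ‖𝓕 g w‖) := by ring
          _ ≤ 2 ^ N * (3/2 * A) := by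
            refine mul_le_mul_of_nonneg_left hnormN (by positivity)
  calc ‖𝓕 g w‖ = ‖𝓕 g w‖ * (1 + |s|) ^ N * ((1 + |s|) ^ N)⁻¹ := by
        field_simp
    _ ≤ (2 ^ N * (3/2 * A)) * ((1 + |s|) ^ N)⁻¹ := by
        refine mul_le_mul_of_nonneg_right hkey (by positivity)
    _ = 2 ^ N * (3/2 * A * ((1 + |s|) ^ N)⁻¹) := by ring

-- helper: within = global iterated derivative for globally smooth functions
lemma itFD_within_eq {f : ℝ → ℂ} {Nn : ℕ} (hf : ContDiff ℝ (Nn : ℕ) f) {s : Set ℝ}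
    (hs : UniqueDiffOn ℝ s) {x : ℝ} (hx : x ∈ s) {m : ℕ} (hm : m ≤ Nn) :
    iteratedFDerivWithin ℝ m f s x = iteratedFDeriv ℝ m f x := by
  have h0 : HasFTaylorSeriesUpTo ((Nn : ℕ∞) : WithTop ℕ∞) f (ftaylorSeries ℝ f) :=
    contDiff_iff_ftaylorSeries.mp (by exact_mod_cast hf)
  have h1 : HasFTaylorSeriesUpToOn ((Nn : ℕ∞) : WithTop ℕ∞) f (ftaylorSeries ℝ f) s :=
    (hasFTaylorSeriesUpToOn_univ_iff.mpr h0).mono (Set.subset_univ s)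
  exact (h1.eq_iteratedFDerivWithin_of_uniqueDiffOn (by exact_mod_cast hm) hs hx).symm

lemma normFDW (f : ℝ → ℂ) (s : Set ℝ) (x : ℝ) (m : ℕ) :
    ‖iteratedFDerivWithin ℝ m f s x‖ = ‖iteratedDerivWithin m f s x‖ := by
  rw [iteratedDerivWithin_eq_equiv_comp]
  simp [LinearIsometryEquiv.norm_map]

/-- Non-stationary phase estimate for the non-oscillating part `B` of the spectral
measure: if `|B^{(α)}(x)| ≤ M x^{-α} (1+xR)^{-(n+1)/2}` for `0 ≤ α ≤ N` on
`[2^{k-1}, 2^{k+1}]`, then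
`|∫_0^∞ e^{itx} φ(2^{-k}x) B(x) x^{n-1} dx| ≤ C M 2^{kn} (1+2^k|t|)^{-N} (1+2^kR)^{-(n+1)/2}`,
with `C` depending only on `n`, `N` and `φ`. -/
theorem nonstationary_phase_B (n N : ℕ) (hn : 1 ≤ n)
    (φ : ℝ → ℂ) (hφ : ContDiff ℝ (⊤ : ℕ∞) φ)
    (hφsupp : Function.support φ ⊆ Set.Icc (1 / 2 : ℝ) 2) :
    ∃ C : ℝ, 0 < C ∧ ∀ (k : ℤ) (R M : ℝ), 0 ≤ R → 0 < M →
      ∀ B : ℝ → ℂ,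
        ContDiffOn ℝ (N : ℕ∞) B (Set.Icc ((2 : ℝ) ^ (k - 1)) ((2 : ℝ) ^ (k + 1))) →
        (∀ α : ℕ, α ≤ N →
          ∀ x ∈ Set.Icc ((2 : ℝ) ^ (k - 1)) ((2 : ℝ) ^ (k + 1)),
          ‖iteratedDerivWithin α B (Set.Icc ((2 : ℝ) ^ (k - 1)) ((2 : ℝ) ^ (k + 1))) x‖ ≤
            M * x ^ (-(α : ℝ)) * (1 + x * R) ^ (-((n : ℝ) + 1) / 2)) →
        ∀ t : ℝ,
          ‖∫ x in Set.Ioi (0 : ℝ),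
              Complex.exp (Complex.I * (t : ℂ) * (x : ℂ)) * φ ((2 : ℝ) ^ (-k) * x) *
                B x * (x : ℂ) ^ (n - 1)‖ ≤
            C * M * (2 : ℝ) ^ (k * (n : ℤ)) * (1 + (2 : ℝ) ^ k * |t|) ^ (-(N : ℝ)) *
              (1 + (2 : ℝ) ^ k * R) ^ (-((n : ℝ) + 1) / 2) := by
  classical
  set q : ℝ := ((n : ℝ) + 1) / 2 with hq_def
  have hq0 : 0 ≤ q := by positivity
  set s₀ : Set ℝ := Set.Icc (1/2 : ℝ) 2 with hs₀_def
  set u : ℝ → ℂ := fun y => φ y * (y : ℂ) ^ (n - 1) with hu_def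
  have hu : ContDiff ℝ (N : ℕ) u := by
    apply ContDiff.mul (hφ.of_le (by exact_mod_cast le_top))
    have : ContDiff ℝ (N : ℕ) (fun y : ℝ => (y : ℂ)) := Complex.ofRealCLM.contDiff
    exact this.pow (n - 1)
  have hsuppu : Function.support u ⊆ s₀ := by
    intro y hy
    refine hφsupp ?_
    intro h0
    exact hy (by simp [hu_def, h0])
  -- uniform bounds on the derivatives of u
  have hubound : ∀ i : ℕ, ∃ D : ℝ, 0 ≤ D ∧ ∀ x : ℝ, i ≤ N → ‖iteratedFDeriv ℝ i u x‖ ≤ D := by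
    intro i
    by_cases hiN : i ≤ N
    · obtain ⟨D, hD⟩ := isCompact_Icc.exists_bound_of_continuousOn
        (f := iteratedFDeriv ℝ i u) (s := s₀)
        ((hu.continuous_iteratedFDeriv (by exact_mod_cast hiN)).continuousOn)
      refine ⟨max D 0, le_max_right _ _, fun x _ => ?_⟩
      by_cases hx : x ∈ s₀
      · exact (hD x hx).trans (le_max_left _ _)
      · rw [norm_iteratedFDeriv_eq_norm_iteratedDeriv,
          iteratedDeriv_zero_outside hsuppu i x hx, norm_zero]
        exact le_max_right _ _
    · exact ⟨0, le_rfl, fun x hle => absurd hle hiN⟩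
  choose D hD0 hDle using hubound
  set C₂ : ℝ := 1 + ∑ i ∈ Finset.range (N + 1), D i with hC₂_def
  have hC₂pos : 0 < C₂ := by
    have : 0 ≤ ∑ i ∈ Finset.range (N + 1), D i := Finset.sum_nonneg fun i _ => hD0 i
    linarith
  have hC₂ : ∀ i : ℕ, i ≤ N → ∀ x : ℝ, ‖iteratedFDeriv ℝ i u x‖ ≤ C₂ := by
    intro i hi x
    refine (hDle i x hi).trans ?_
    have h1 : D i ≤ ∑ j ∈ Finset.range (N + 1), D j :=
      Finset.single_le_sum (fun j _ => hD0 j) (Finset.mem_range.mpr (Nat.lt_succ_of_le hi))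
    linarith
  set CA : ℝ := 2 ^ N * (C₂ * (2 ^ N * (2 : ℝ) ^ q)) with hCA_def
  have hCApos : 0 < CA := by positivity
  refine ⟨2 ^ N * (3 / 2) * CA, by positivity, ?_⟩
  intro k R M hR hM B hB hBd t
  set c : ℝ := (2 : ℝ) ^ k with hc_def
  have hc : 0 < c := zpow_pos (by norm_num) k
  set a : ℝ := (2 : ℝ) ^ (k - 1) with ha_def
  set b2 : ℝ := (2 : ℝ) ^ (k + 1) with hb2_def
  have hac : a = c / 2 := by
    rw [ha_def, hc_def, zpow_sub₀ (by norm_num : (2:ℝ) ≠ 0), zpow_one]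
  have hb2c : b2 = 2 * c := by
    rw [hb2_def, hc_def, zpow_add₀ (by norm_num : (2:ℝ) ≠ 0), zpow_one, mul_comm]
  have hab : a < b2 := by rw [hac, hb2c]; linarith
  have hmaps : ∀ y ∈ s₀, c * y ∈ Set.Icc a b2 := by
    intro y hy
    obtain ⟨hy1, hy2⟩ := hy
    constructor
    · rw [hac]; nlinarith
    · rw [hb2c]; nlinarith
  set h : ℝ → ℂ := fun y => B (c * y) with hh_def
  have hB' : ContDiffOn ℝ (N : ℕ) B (Set.Icc a b2) := by exact_mod_cast hB
  set L : ℝ →L[ℝ] ℝ := c • ContinuousLinearMap.id ℝ ℝ with hL_def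
  have hLapp : ∀ z : ℝ, L z = c * z := by
    intro z; simp [hL_def, smul_eq_mul]
  have hpre : L ⁻¹' Set.Icc a b2 = s₀ := by
    ext z
    simp only [Set.mem_preimage, hLapp, Set.mem_Icc, hs₀_def, hac, hb2c]
    constructor
    · rintro ⟨h1, h2⟩
      constructor
      · by_contra hcon
        push_neg at hcon
        nlinarith
      · by_contra hcon
        push_neg at hcon
        nlinarith
    · rintro ⟨h1, h2⟩
      constructor
      · nlinarith
      · nlinarith
  have hhc : h = B ∘ L := by
    funext z; simp [hh_def, hLapp]
  have hh : ContDiffOn ℝ (N : ℕ) h s₀ := by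
    rw [hhc, ← hpre]
    exact hB'.comp_continuousLinearMap L
  set g : ℝ → ℂ := fun y => u y * h y with hg_def
  have hg : ContDiff ℝ (N : ℕ) g := glue_mul (by norm_num : (1/2 : ℝ) < 2) N u h hu hsuppu hh
  have hsuppg : Function.support g ⊆ s₀ := by
    intro y hy
    refine hsuppu ?_
    intro h0
    exact hy (by simp [hg_def, h0])
  -- the norm bound on L
  have hLnorm : ‖L‖ ≤ c := by
    refine ContinuousLinearMap.opNorm_le_bound _ hc.le ?_
    intro x
    rw [hLapp, Real.norm_eq_abs, Real.norm_eq_abs, abs_mul, abs_of_pos hc]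
  -- bound on derivatives of h
  have hhb : ∀ (m : ℕ), m ≤ N → ∀ y ∈ s₀, ‖iteratedFDerivWithin ℝ m h s₀ y‖ ≤
      2 ^ N * ((2:ℝ) ^ q * (M * (1 + c * R) ^ (-q))) := by
    intro m hm y hy
    have hyl : (1/2 : ℝ) ≤ y := hy.1
    have hyu : y ≤ 2 := hy.2
    have hy0 : 0 < y := by linarith
    have hcy : c * y ∈ Set.Icc a b2 := hmaps y hy
    have hcy0 : 0 < c * y := by positivity
    have hcomp : iteratedFDerivWithin ℝ m h s₀ y
        = (iteratedFDerivWithin ℝ m B (Set.Icc a b2) (L y)).compContinuousLinearMap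
          (fun _ => L) := by
      rw [hhc, ← hpre]
      refine L.iteratedFDerivWithin_comp_right hB' (uniqueDiffOn_Icc hab) ?_ ?_
        (by exact_mod_cast hm)
      · rw [hpre]; exact uniqueDiffOn_Icc (by norm_num)
      · rw [hLapp]; exact hcy
    rw [hcomp]
    refine le_trans (ContinuousMultilinearMap.norm_compContinuousLinearMap_le _ _) ?_
    have hprod : (∏ _i : Fin m, ‖L‖) ≤ c ^ m := by
      rw [Finset.prod_const, Finset.card_univ, Fintype.card_fin]
      exact pow_le_pow_left₀ (norm_nonneg L) hLnorm m
    have hBnorm : ‖iteratedFDerivWithin ℝ m B (Set.Icc a b2) (L y)‖ ≤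
        M * (c * y) ^ (-(m : ℝ)) * (1 + c * y * R) ^ (-((n : ℝ) + 1) / 2) := by
      rw [normFDW, hLapp]
      exact hBd m hm (c * y) hcy
    have hq_eq : (-((n : ℝ) + 1) / 2) = -q := by rw [hq_def]; ring
    rw [hq_eq] at hBnorm
    calc ‖iteratedFDerivWithin ℝ m B (Set.Icc a b2) (L y)‖ * ∏ _i : Fin m, ‖L‖
        ≤ (M * (c * y) ^ (-(m : ℝ)) * (1 + c * y * R) ^ (-q)) * c ^ m := by
          refine mul_le_mul hBnorm hprod (Finset.prod_nonneg fun _ _ => norm_nonneg _) ?_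
          positivity
      _ = M * (c ^ m * (c * y) ^ (-(m : ℝ))) * (1 + c * y * R) ^ (-q) := by ring
      _ ≤ M * (2 ^ N) * ((2:ℝ) ^ q * (1 + c * R) ^ (-q)) := by
          refine mul_le_mul (mul_le_mul le_rfl ?_ (by positivity) hM.le) ?_ (by positivity)
            (by positivity)
          · -- c ^ m * (c*y) ^ (-(m:ℝ)) ≤ 2 ^ N
            rw [Real.rpow_neg hcy0.le, Real.rpow_natCast]
            have h1 : c ^ m * ((c * y) ^ m)⁻¹ = (1 / y) ^ m := by
              rw [mul_pow]
              field_simp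
              rw [← mul_pow, mul_one_div_cancel hy0.ne', one_pow]
            rw [h1]
            calc (1 / y) ^ m ≤ 2 ^ m :=
                  pow_le_pow_left₀ (by positivity) (by rw [div_le_iff₀ hy0]; linarith) m
              _ ≤ 2 ^ N := pow_le_pow_right₀ (by norm_num) hm
          · -- (1 + c*y*R) ^ (-q) ≤ 2^q * (1+c*R)^(-q)
            have hpos1 : (0:ℝ) < (1 + c * R) / 2 := by positivity
            have hle1 : (1 + c * R) / 2 ≤ 1 + c * y * R := by
              nlinarith [mul_nonneg (mul_nonneg hc.le hR) (by linarith : (0:ℝ) ≤ 2 * y - 1)]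
            have h2 : (1 + c * y * R) ^ (-q) ≤ ((1 + c * R) / 2) ^ (-q) :=
              Real.rpow_le_rpow_of_nonpos hpos1 hle1 (by linarith)
            refine h2.trans ?_
            rw [Real.div_rpow (by positivity) (by norm_num : (0:ℝ) ≤ 2)]
            rw [Real.rpow_neg (by positivity : (0:ℝ) ≤ 1 + c * R), Real.rpow_neg
              (by norm_num : (0:ℝ) ≤ 2)]
            rw [div_inv_eq_mul]
            ring_nf
            rw [mul_comm]
      _ = 2 ^ N * ((2:ℝ) ^ q * (M * (1 + c * R) ^ (-q))) := by ring
  -- derivative bounds for g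
  set A : ℝ := CA * (M * (1 + c * R) ^ (-q)) with hA_def
  have hA0 : 0 ≤ A := by positivity
  have hAg : ∀ α : ℕ, α ≤ N → ∀ y ∈ s₀, ‖iteratedDeriv α g y‖ ≤ A := by
    intro α hα y hy
    rw [← norm_iteratedFDeriv_eq_norm_iteratedDeriv,
      ← itFD_within_eq hg (uniqueDiffOn_Icc (by norm_num)) hy hα]
    refine le_trans (norm_iteratedFDerivWithin_mul_le (N := ((N:ℕ) : WithTop ℕ∞))
      hu.contDiffOn hh (uniqueDiffOn_Icc (by norm_num)) hy (by exact_mod_cast hα)) ?_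
    have hterm : ∀ i ∈ Finset.range (α + 1),
        (α.choose i : ℝ) * ‖iteratedFDerivWithin ℝ i u s₀ y‖ *
          ‖iteratedFDerivWithin ℝ (α - i) h s₀ y‖ ≤
        (α.choose i : ℝ) * (C₂ * (2 ^ N * ((2:ℝ) ^ q * (M * (1 + c * R) ^ (-q))))) := by
      intro i hi
      have hiα : i ≤ α := Nat.lt_succ_iff.mp (Finset.mem_range.mp hi)
      have hiu : ‖iteratedFDerivWithin ℝ i u s₀ y‖ ≤ C₂ := by
        rw [itFD_within_eq hu (uniqueDiffOn_Icc (by norm_num)) hy (hiα.trans hα)]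
        exact hC₂ i (hiα.trans hα) y
      have hih : ‖iteratedFDerivWithin ℝ (α - i) h s₀ y‖ ≤
          2 ^ N * ((2:ℝ) ^ q * (M * (1 + c * R) ^ (-q))) :=
        hhb (α - i) ((Nat.sub_le α i).trans hα) y hy
      calc (α.choose i : ℝ) * ‖iteratedFDerivWithin ℝ i u s₀ y‖ *
            ‖iteratedFDerivWithin ℝ (α - i) h s₀ y‖
          ≤ (α.choose i : ℝ) * C₂ * (2 ^ N * ((2:ℝ) ^ q * (M * (1 + c * R) ^ (-q)))) := by
            refine mul_le_mul (mul_le_mul le_rfl hiu (norm_nonneg _) (by positivity)) hih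
              (norm_nonneg _) (by positivity)
        _ = (α.choose i : ℝ) * (C₂ * (2 ^ N * ((2:ℝ) ^ q * (M * (1 + c * R) ^ (-q))))) := by
            ring
    refine le_trans (Finset.sum_le_sum hterm) ?_
    rw [← Finset.sum_mul]
    have hsum : ∑ i ∈ Finset.range (α + 1), (α.choose i : ℝ) = 2 ^ α := by
      rw [← Nat.cast_sum]
      rw [Nat.sum_range_choose]
      push_cast
      ring
    rw [hsum, hA_def, hCA_def]
    calc (2:ℝ) ^ α * (C₂ * (2 ^ N * ((2:ℝ) ^ q * (M * (1 + c * R) ^ (-q)))))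
        ≤ (2:ℝ) ^ N * (C₂ * (2 ^ N * ((2:ℝ) ^ q * (M * (1 + c * R) ^ (-q))))) := by
          refine mul_le_mul_of_nonneg_right (pow_le_pow_right₀ (by norm_num) hα) (by positivity)
      _ = 2 ^ N * (C₂ * (2 ^ N * (2:ℝ) ^ q)) * (M * (1 + c * R) ^ (-q)) := by ring
  -- now the integral manipulation
  set F : ℝ → ℂ := fun x => Complex.exp (Complex.I * (t : ℂ) * (x : ℂ)) *
    φ ((2 : ℝ) ^ (-k) * x) * B x * (x : ℂ) ^ (n - 1) with hF_def
  set s : ℝ := c * t with hs_def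
  have harg : ∀ y : ℝ, (2 : ℝ) ^ (-k) * (c * y) = y := by
    intro y
    rw [hc_def, ← mul_assoc, ← zpow_add₀ (by norm_num : (2:ℝ) ≠ 0)]
    simp
  have hpt : ∀ y : ℝ, F (c * y) = (c : ℂ) ^ (n - 1) *
      (Complex.exp (Complex.I * (s : ℝ) * y) * g y) := by
    intro y
    have hexp : Complex.I * (t : ℂ) * ((c * y : ℝ) : ℂ) =
        Complex.I * ((s : ℝ) : ℂ) * (y : ℂ) := by
      rw [hs_def]; push_cast; ring
    rw [hF_def]
    simp only
    rw [harg y, hexp, hg_def, hu_def, hh_def]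
    simp only
    push_cast
    ring
  have hchg : (∫ x in Set.Ioi (0:ℝ), F x) = c • ∫ y in Set.Ioi (0:ℝ), F (c * y) := by
    have h6 := MeasureTheory.integral_comp_mul_left_Ioi F 0 hc
    rw [mul_zero] at h6
    rw [h6, smul_smul, mul_inv_cancel₀ hc.ne', one_smul]
  have hgzero : ∀ y : ℝ, y ∉ Set.Ioi (0:ℝ) → Complex.exp (Complex.I * (s : ℝ) * y) * g y = 0 := by
    intro y hy
    have hy0 : y ≤ 0 := not_lt.mp hy
    have hgy : g y = 0 := by
      have : y ∉ s₀ := by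
        rw [hs₀_def]; simp only [Set.mem_Icc, not_and_or]; left; push_neg; linarith
      have : u y = 0 := Function.notMem_support.mp fun hs' => this (hsuppu hs')
      simp [hg_def, this]
    rw [hgy, mul_zero]
  have hint_eq : (∫ y in Set.Ioi (0:ℝ), Complex.exp (Complex.I * (s : ℝ) * y) * g y) =
      ∫ y : ℝ, Complex.exp (Complex.I * (s : ℝ) * y) * g y :=
    setIntegral_eq_integral_of_forall_compl_eq_zero hgzero
  have hsplit : (∫ x in Set.Ioi (0:ℝ), F x) = c • ((c : ℂ) ^ (n - 1) *
      ∫ y : ℝ, Complex.exp (Complex.I * (s : ℝ) * y) * g y) := by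
    rw [hchg]
    congr 1
    rw [← hint_eq, ← MeasureTheory.integral_const_mul]
    exact setIntegral_congr_fun measurableSet_Ioi fun y _ => hpt y
  have hcore := core_decay N g hg hsuppg A hA0 hAg s
  rw [hsplit]
  rw [norm_smul, norm_mul, norm_pow, Complex.norm_real, Real.norm_eq_abs,
    abs_of_pos hc]
  have hcc : c * (c ^ (n - 1) * ‖∫ y : ℝ, Complex.exp (Complex.I * (s : ℝ) * y) * g y‖) =
      c ^ n * ‖∫ y : ℝ, Complex.exp (Complex.I * (s : ℝ) * y) * g y‖ := by
    rw [← mul_assoc, ← pow_succ']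
    congr 2
    omega
  rw [hcc]
  have hs_abs : |s| = c * |t| := by rw [hs_def, abs_mul, abs_of_pos hc]
  have hcn : c ^ n = (2 : ℝ) ^ (k * (n : ℤ)) := by
    rw [hc_def, ← zpow_natCast ((2:ℝ) ^ k) n, ← zpow_mul]
  have hq_eq : (-((n : ℝ) + 1) / 2) = -q := by rw [hq_def]; ring
  rw [hq_eq]
  calc c ^ n * ‖∫ y : ℝ, Complex.exp (Complex.I * (s : ℝ) * y) * g y‖
      ≤ c ^ n * (2 ^ N * (3/2) * A * (1 + |s|) ^ (-(N : ℝ))) := by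
        exact mul_le_mul_of_nonneg_left hcore (by positivity)
    _ = 2 ^ N * (3/2) * CA * M * c ^ n * (1 + c * |t|) ^ (-(N : ℝ)) *
        (1 + c * R) ^ (-q) := by
        rw [hA_def, hs_abs]; ring
    _ = 2 ^ N * (3 / 2) * CA * M * (2 : ℝ) ^ (k * (n : ℤ)) *
        (1 + (2 : ℝ) ^ k * |t|) ^ (-(N : ℝ)) * (1 + (2 : ℝ) ^ k * R) ^ (-q) := by
        rw [hcn, hc_def]
end

section
/- Let n ≥ 1 and N ≥ 0 be integers, let k ∈ ℤ, and let φ : ℝ → ℂ be a smooth function with support contained in [1/2, 2]. Let R ≥ 0 and M > 0, and suppose A : (0,∞) → ℂ is N-times continuously differentiable on [2^{k-1}, 2^{k+1}] with |A^{(α)}(λ)| ≤ M λ^{-α} (1+λR)^{-(n-1)/2} for all integers 0 ≤ α ≤ N and all λ ∈ [2^{k-1}, 2^{k+1}]. Then there is a constant C depending only on n, N and φ such that for every t ∈ ℝ and for each choice of sign ±: | ∫_0^∞ e^{itλ} e^{±iλR} φ(2^{-k}λ) A(λ) λ^{n-1} dλ | ≤ C M · 2^{kn} · (1+2^k|t±R|)^{-N}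 · (1+2^k R)^{-(n-1)/2}. -/
open MeasureTheory

namespace NSPaux

open Set

lemma itdw_eq_itd {f : ℝ → ℂ} (hf : ContDiff ℝ ((⊤ : ℕ∞) : WithTop ℕ∞) f) {s : Set ℝ}
    (hs : UniqueDiffOn ℝ s) {x : ℝ} (hx : x ∈ s) (j : ℕ) :
    iteratedDerivWithin j f s x = iteratedDeriv j f x := by
  have h1 : HasFTaylorSeriesUpToOn ((⊤ : ℕ∞) : WithTop ℕ∞) f (ftaylorSeries ℝ f) s :=
    (contDiff_iff_ftaylorSeries.mp hf).hasFTaylorSeriesUpToOn s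
  have h2 := h1.eq_iteratedFDerivWithin_of_uniqueDiffOn (m := j) (by exact_mod_cast le_top) hs hx
  rw [iteratedDerivWithin_eq_iteratedFDerivWithin, iteratedDeriv_eq_iteratedFDeriv, ← h2]
  rfl

lemma iteratedDeriv_eq_zero_of_eqOn_zero {f : ℝ → ℂ} (hf : ContDiff ℝ ((⊤ : ℕ∞) : WithTop ℕ∞) f)
    {U : Set ℝ} (hU : IsOpen U) (h0 : ∀ x ∈ U, f x = 0) (j : ℕ) :
    ∀ x ∈ closure U, iteratedDeriv j f x = 0 := by
  have hEq : Set.EqOn (iteratedDeriv j f) 0 U := by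
    induction j with
    | zero => intro x hx; simpa [iteratedDeriv_zero] using h0 x hx
    | succ j ih =>
      intro x hx
      have hev : iteratedDeriv j f =ᶠ[nhds x] (fun _ => (0 : ℂ)) :=
        Filter.eventuallyEq_of_mem (hU.mem_nhds hx) ih
      rw [iteratedDeriv_succ]
      simp [hev.deriv_eq]
  have hc : Continuous (iteratedDeriv j f) :=
    hf.continuous_iteratedDeriv j (by exact_mod_cast le_top)
  intro x hx
  exact (hEq.closure hc continuous_const) hx

lemma hasCompactSupport_iteratedDeriv {f : ℝ → ℂ} (hf : HasCompactSupport f) (j : ℕ) :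
    HasCompactSupport (iteratedDeriv j f) := by
  induction j with
  | zero => simpa [iteratedDeriv_zero] using hf
  | succ j ih => rw [iteratedDeriv_succ]; exact ih.deriv

lemma exists_iteratedDeriv_bound {f : ℝ → ℂ} (hf : ContDiff ℝ ((⊤ : ℕ∞) : WithTop ℕ∞) f)
    (h : HasCompactSupport f) (N : ℕ) :
    ∃ C : ℝ, 0 ≤ C ∧ ∀ j ≤ N, ∀ y : ℝ, ‖iteratedDeriv j f y‖ ≤ C := by
  induction N with
  | zero =>
    obtain ⟨C, hC⟩ := h.exists_bound_of_continuous hf.continuous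
    refine ⟨max C 0, le_max_right _ _, ?_⟩
    intro j hj y
    obtain rfl : j = 0 := Nat.le_zero.mp hj
    rw [iteratedDeriv_zero]; exact (hC y).trans (le_max_left _ _)
  | succ N ihN =>
    obtain ⟨C₁, hC₁0, hC₁⟩ := ihN
    obtain ⟨C₂, hC₂⟩ := (hasCompactSupport_iteratedDeriv h (N + 1)).exists_bound_of_continuous
      (hf.continuous_iteratedDeriv (N + 1) (by exact_mod_cast le_top))
    refine ⟨max C₁ (max C₂ 0), le_trans hC₁0 (le_max_left _ _), ?_⟩
    intro j hj y
    rcases Nat.lt_succ_iff_lt_or_eq.mp (Nat.lt_succ_of_le hj) with hlt | rfl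
    · exact (hC₁ j (Nat.lt_succ_iff.mp hlt) y).trans (le_max_left _ _)
    · exact (hC₂ y).trans (le_trans (le_max_left _ _) (le_max_right _ _))

lemma norm_exp_I_mul (s x : ℝ) : ‖Complex.exp (Complex.I * s * x)‖ = 1 := by
  have : Complex.I * s * x = ((s * x : ℝ) : ℂ) * Complex.I := by push_cast; ring
  rw [this, Complex.norm_exp_ofReal_mul_I]

lemma ibp_bound {a b : ℝ} (hab : a < b) (s : ℝ) {B : ℝ} (N : ℕ) :
    ∀ g : ℝ → ℂ, ContDiffOn ℝ N g (Set.Icc a b) →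
      (∀ j, j < N → iteratedDerivWithin j g (Set.Icc a b) a = 0 ∧
                 iteratedDerivWithin j g (Set.Icc a b) b = 0) →
      (∀ x ∈ Set.Icc a b, ‖iteratedDerivWithin N g (Set.Icc a b) x‖ ≤ B) →
      (s ≠ 0 ∨ N = 0) →
      ‖∫ x in a..b, Complex.exp (Complex.I * s * x) * g x‖ ≤ |s|⁻¹ ^ N * (B * (b - a)) := by
  induction N with
  | zero =>
    intro g hg _ hB _
    simp only [pow_zero, one_mul]
    have h1 : ‖∫ x in a..b, Complex.exp (Complex.I * s * x) * g x‖ ≤ B * |b - a| := by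
      apply intervalIntegral.norm_integral_le_of_norm_le_const
      intro x hx
      rw [Set.uIoc_of_le hab.le] at hx
      have hxS : x ∈ Set.Icc a b := Set.Ioc_subset_Icc_self hx
      have := hB x hxS
      rw [iteratedDerivWithin_zero] at this
      calc ‖Complex.exp (Complex.I * s * x) * g x‖
          = ‖g x‖ := by rw [norm_mul, norm_exp_I_mul, one_mul]
        _ ≤ B := this
    rwa [abs_of_nonneg (by linarith : (0:ℝ) ≤ b - a)] at h1
  | succ N ih =>
    intro g hg hbd hB hs
    have hs0 : s ≠ 0 := hs.resolve_right (Nat.succ_ne_zero N)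
    have hUD : UniqueDiffOn ℝ (Set.Icc a b) := uniqueDiffOn_Icc hab
    set S := Set.Icc a b with hSdef
    set g' := derivWithin g S with hg'def
    have hamem : a ∈ S := Set.left_mem_Icc.mpr hab.le
    have hbmem : b ∈ S := Set.right_mem_Icc.mpr hab.le
    have hg' : ContDiffOn ℝ N g' S := hg.derivWithin hUD (by exact_mod_cast le_refl (N+1))
    have hgc : ContinuousOn g S := hg.continuousOn
    have hg'c : ContinuousOn g' S := hg.continuousOn_derivWithin hUD
      (by exact_mod_cast Nat.one_le_iff_ne_zero.mpr (Nat.succ_ne_zero N))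
    have hec : Continuous fun y : ℝ => Complex.exp (Complex.I * s * y) :=
      ((continuous_const.mul Complex.continuous_ofReal)).cexp
    have key : ∀ x ∈ Set.Ioo a b, HasDerivAt (fun y : ℝ => Complex.exp (Complex.I * s * y) * g y)
        (Complex.I * s * Complex.exp (Complex.I * s * x) * g x
          + Complex.exp (Complex.I * s * x) * g' x) x := by
      intro x hx
      have hxS : x ∈ S := Set.Ioo_subset_Icc_self hx
      have hgd : HasDerivAt g (g' x) x := by
        have hd : DifferentiableWithinAt ℝ g S x :=
          (hg.differentiableOn
            (by simp)) x hxS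
        exact hd.hasDerivWithinAt.hasDerivAt (Icc_mem_nhds hx.1 hx.2)
      have hed : HasDerivAt (fun y : ℝ => Complex.exp (Complex.I * s * y))
          (Complex.I * s * Complex.exp (Complex.I * s * x)) x := by
        have h2 : HasDerivAt (fun z : ℂ => Complex.I * s * z) (Complex.I * s) (x : ℂ) := by
          simpa using (hasDerivAt_id (x : ℂ)).const_mul (Complex.I * s)
        have h1 : HasDerivAt (fun z : ℂ => Complex.exp (Complex.I * s * z))
            (Complex.exp (Complex.I * s * x) * (Complex.I * s)) (x : ℂ) :=
          (Complex.hasDerivAt_exp (Complex.I * s * x)).comp (x : ℂ) h2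
        have := h1.comp_ofReal
        simpa [mul_comm] using this
      exact hed.mul hgd
    have hu : IntervalIntegrable
        (fun x : ℝ => Complex.I * s * Complex.exp (Complex.I * s * x) * g x) volume a b := by
      apply ContinuousOn.intervalIntegrable
      rw [Set.uIcc_of_le hab.le]
      exact ((continuous_const.mul hec).continuousOn.mul hgc)
    have hv : IntervalIntegrable
        (fun x : ℝ => Complex.exp (Complex.I * s * x) * g' x) volume a b := by
      apply ContinuousOn.intervalIntegrable
      rw [Set.uIcc_of_le hab.le]
      exact hec.continuousOn.mul hg'c
    have hftc := intervalIntegral.integral_eq_sub_of_hasDeriv_right_of_le hab.le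
      (hec.continuousOn.mul hgc) (fun x hx => (key x hx).hasDerivWithinAt) (hu.add hv)
    have hga : g a = 0 := by
      have := (hbd 0 (Nat.succ_pos N)).1; rwa [iteratedDerivWithin_zero] at this
    have hgb : g b = 0 := by
      have := (hbd 0 (Nat.succ_pos N)).2; rwa [iteratedDerivWithin_zero] at this
    rw [Pi.mul_apply, Pi.mul_apply, hga, hgb, mul_zero, mul_zero, sub_zero] at hftc
    rw [intervalIntegral.integral_add hu hv] at hftc
    have hiu : (∫ x in a..b, Complex.I * s * Complex.exp (Complex.I * s * x) * g x)
        = Complex.I * s * ∫ x in a..b, Complex.exp (Complex.I * s * x) * g x := by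
      rw [← intervalIntegral.integral_const_mul]
      congr 1; ext x; ring
    rw [hiu] at hftc
    have heq : Complex.I * s * ∫ x in a..b, Complex.exp (Complex.I * s * x) * g x
        = - ∫ x in a..b, Complex.exp (Complex.I * s * x) * g' x := by
      linear_combination hftc
    have hnorm : |s| * ‖∫ x in a..b, Complex.exp (Complex.I * s * x) * g x‖
        = ‖∫ x in a..b, Complex.exp (Complex.I * s * x) * g' x‖ := by
      have := congrArg norm heq
      rwa [norm_neg, norm_mul, norm_mul, Complex.norm_I, one_mul, Complex.norm_real,
        Real.norm_eq_abs] at this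
    have hIH : ‖∫ x in a..b, Complex.exp (Complex.I * s * x) * g' x‖
        ≤ |s|⁻¹ ^ N * (B * (b - a)) := by
      apply ih g' hg'
      · intro j hj
        have h1 := hbd (j + 1) (Nat.succ_lt_succ hj)
        constructor
        · rw [hg'def, ← iteratedDerivWithin_succ']; exact h1.1
        · rw [hg'def, ← iteratedDerivWithin_succ']; exact h1.2
      · intro x hx
        rw [hg'def, ← iteratedDerivWithin_succ']
        exact hB x hx
      · exact Or.inl hs0
    have hspos : 0 < |s| := abs_pos.mpr hs0
    calc ‖∫ x in a..b, Complex.exp (Complex.I * s * x) * g x‖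
        = |s|⁻¹ * (|s| * ‖∫ x in a..b, Complex.exp (Complex.I * s * x) * g x‖) := by
          field_simp
      _ = |s|⁻¹ * ‖∫ x in a..b, Complex.exp (Complex.I * s * x) * g' x‖ := by rw [hnorm]
      _ ≤ |s|⁻¹ * (|s|⁻¹ ^ N * (B * (b - a))) := by
          apply mul_le_mul_of_nonneg_left hIH (by positivity)
      _ = |s|⁻¹ ^ (N + 1) * (B * (b - a)) := by ring

end NSPaux

open NSPaux

set_option maxHeartbeats 2000000 in
/-- Non-stationary phase estimate for the oscillating parts `A e^{±ixR}` of the spectral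
measure: if `|A^{(α)}(x)| ≤ M x^{-α} (1+xR)^{-(n-1)/2}` for `0 ≤ α ≤ N` on
`[2^{k-1}, 2^{k+1}]`, then for each sign `ε = ±1`,
`|∫_0^∞ e^{itx} e^{iεxR} φ(2^{-k}x) A(x) x^{n-1} dx| ≤
  C M 2^{kn} (1+2^k|t+εR|)^{-N} (1+2^kR)^{-(n-1)/2}`,
with `C` depending only on `n`, `N` and `φ`. -/
theorem nonstationary_phase_A (n N : ℕ) (hn : 1 ≤ n)
    (φ : ℝ → ℂ) (hφ : ContDiff ℝ (⊤ : ℕ∞) φ)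
    (hφsupp : Function.support φ ⊆ Set.Icc (1 / 2 : ℝ) 2) :
    ∃ C : ℝ, 0 < C ∧ ∀ (k : ℤ) (R M : ℝ), 0 ≤ R → 0 < M →
      ∀ A : ℝ → ℂ,
        ContDiffOn ℝ (N : ℕ∞) A (Set.Icc ((2 : ℝ) ^ (k - 1)) ((2 : ℝ) ^ (k + 1))) →
        (∀ α : ℕ, α ≤ N →
          ∀ x ∈ Set.Icc ((2 : ℝ) ^ (k - 1)) ((2 : ℝ) ^ (k + 1)),
          ‖iteratedDerivWithin α A (Set.Icc ((2 : ℝ) ^ (k - 1)) ((2 : ℝ) ^ (k + 1))) x‖ ≤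
            M * x ^ (-(α : ℝ)) * (1 + x * R) ^ (-((n : ℝ) - 1) / 2)) →
        ∀ ε : ℝ, (ε = 1 ∨ ε = -1) → ∀ t : ℝ,
          ‖∫ x in Set.Ioi (0 : ℝ),
              Complex.exp (Complex.I * (t : ℂ) * (x : ℂ)) *
                Complex.exp (Complex.I * (ε : ℂ) * (x : ℂ) * (R : ℂ)) *
                φ ((2 : ℝ) ^ (-k) * x) * A x * (x : ℂ) ^ (n - 1)‖ ≤
            C * M * (2 : ℝ) ^ (k * (n : ℤ)) *
              (1 + (2 : ℝ) ^ k * |t + ε * R|) ^ (-(N : ℝ)) *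
              (1 + (2 : ℝ) ^ k * R) ^ (-((n : ℝ) - 1) / 2) := by
  classical
  -- the rescaled profile
  set q : ℝ := ((n : ℝ) - 1) / 2 with hq
  have hq0 : 0 ≤ q := by
    have : (1:ℝ) ≤ (n:ℝ) := by exact_mod_cast hn
    rw [hq]; linarith
  set ψ : ℝ → ℂ := fun y : ℝ => φ y * (y : ℂ) ^ (n - 1) with hψdef
  have hψ : ContDiff ℝ ((⊤ : ℕ∞) : WithTop ℕ∞) ψ :=
    (hφ.of_le (by simp)).mul ((Complex.ofRealCLM.contDiff).pow (n - 1))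
  have hψsupp : Function.support ψ ⊆ Set.Icc (1 / 2 : ℝ) 2 :=
    fun y hy => hφsupp (Function.support_mul_subset_left _ _ hy)
  have hψzero : ∀ y : ℝ, y ∉ Set.Icc (1 / 2 : ℝ) 2 → ψ y = 0 := by
    intro y hy
    by_contra h
    exact hy (hψsupp h)
  have hψcs : HasCompactSupport ψ :=
    HasCompactSupport.intro isCompact_Icc hψzero
  obtain ⟨Cψ, hCψ0, hCψ⟩ := exists_iteratedDeriv_bound hψ hψcs N
  have hvanl : ∀ j : ℕ, iteratedDeriv j ψ (1 / 2 : ℝ) = 0 := by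
    intro j
    apply iteratedDeriv_eq_zero_of_eqOn_zero hψ isOpen_Iio
      (fun x hx => hψzero x (by simp only [Set.mem_Icc, not_and_or]; left; exact not_le.mpr hx))
      j (1/2 : ℝ)
    rw [closure_Iio]; exact Set.self_mem_Iic
  have hvanr : ∀ j : ℕ, iteratedDeriv j ψ (2 : ℝ) = 0 := by
    intro j
    apply iteratedDeriv_eq_zero_of_eqOn_zero hψ isOpen_Ioi
      (fun x hx => hψzero x (by simp only [Set.mem_Icc, not_and_or]; right; exact not_le.mpr hx))
      j (2 : ℝ)
    rw [closure_Ioi]; exact Set.self_mem_Ici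
  set K : ℝ := (Cψ + 1) * 2 ^ N * 2 ^ N * (2 : ℝ) ^ q with hK
  have hKpos : 0 < K := by positivity
  refine ⟨K * 2 ^ (N + 1), by positivity, ?_⟩
  intro k R M hR hM A hA hAb ε hε t

  -- setup of scales
  set P : ℝ := (2:ℝ) ^ k with hPdef
  have hP : 0 < P := zpow_pos (by norm_num) k
  set a : ℝ := (2:ℝ) ^ (k - 1) with hadef
  set b : ℝ := (2:ℝ) ^ (k + 1) with hbdef
  have hab : a < b := by
    rw [hadef, hbdef]; exact zpow_lt_zpow_right₀ (by norm_num) (by omega)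
  have haP : a = P / 2 := by
    rw [hadef, hPdef, zpow_sub₀ (by norm_num : (2:ℝ) ≠ 0), zpow_one]
  have hbP : b = P * 2 := by
    rw [hbdef, hPdef, zpow_add₀ (by norm_num : (2:ℝ) ≠ 0), zpow_one]
  have ha : 0 < a := by rw [haP]; positivity
  set S := Set.Icc a b with hSdef
  have hUD : UniqueDiffOn ℝ S := uniqueDiffOn_Icc hab
  set s : ℝ := t + ε * R with hsdef
  set Ψ : ℝ → ℂ := fun x : ℝ => ((P : ℂ)) ^ (n - 1) * ψ (P⁻¹ * x) with hΨdef
  set g : ℝ → ℂ := fun x : ℝ => Ψ x * A x with hgdef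
  have hψcomp : ContDiff ℝ ((⊤ : ℕ∞) : WithTop ℕ∞) (fun x : ℝ => ψ (P⁻¹ * x)) :=
    hψ.comp (contDiff_const.mul contDiff_id)
  have hΨ : ContDiff ℝ ((⊤ : ℕ∞) : WithTop ℕ∞) Ψ := contDiff_const.mul hψcomp
  have hA' : ContDiffOn ℝ (N : WithTop ℕ∞) A S := by exact_mod_cast hA
  have hΨCD : ContDiffOn ℝ (N : WithTop ℕ∞) Ψ S :=
    (hΨ.of_le (by exact_mod_cast le_top)).contDiffOn
  have hgCD : ContDiffOn ℝ (N : WithTop ℕ∞) g S := hΨCD.mul hA'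
  -- formula for derivatives of Ψ
  have hΨfor : ∀ (i : ℕ) (x : ℝ),
      ‖iteratedDeriv i Ψ x‖ = P ^ (n-1) * (P⁻¹) ^ i * ‖iteratedDeriv i ψ (P⁻¹ * x)‖ := by
    intro i x
    have hsm : Ψ = ((P:ℂ) ^ (n-1)) • (fun x : ℝ => ψ (P⁻¹ * x)) := by
      funext y; simp [hΨdef, smul_eq_mul]
    have h1 : iteratedDeriv i Ψ x
        = (P:ℂ)^(n-1) • iteratedDeriv i (fun x : ℝ => ψ (P⁻¹ * x)) x := by
      rw [hsm, ← iteratedDerivWithin_univ, ← iteratedDerivWithin_univ]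
      exact iteratedDerivWithin_const_smul (Set.mem_univ x) uniqueDiffOn_univ _
        (hψcomp.contDiffWithinAt.of_le (by exact_mod_cast le_top))
    have h2 : iteratedDeriv i (fun x : ℝ => ψ (P⁻¹ * x)) x
        = (P⁻¹) ^ i • iteratedDeriv i ψ (P⁻¹ * x) := by
      have h3 := iteratedDeriv_comp_const_smul (n := i) (f := ψ)
        (hψ.of_le (by exact_mod_cast le_top)) P⁻¹
      exact congrFun h3 x
    rw [h1, h2, norm_smul, norm_smul, norm_pow, norm_pow, Complex.norm_real,
      Real.norm_eq_abs, Real.norm_eq_abs, abs_of_pos hP, abs_of_pos (inv_pos.mpr hP), mul_assoc]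
  have hΨbd : ∀ i : ℕ, i ≤ N → ∀ x : ℝ,
      ‖iteratedDeriv i Ψ x‖ ≤ P ^ (n-1) * (P⁻¹) ^ i * Cψ := by
    intro i hi x
    rw [hΨfor i x]
    have h0 : (0:ℝ) ≤ P ^ (n-1) * (P⁻¹) ^ i :=
      mul_nonneg (pow_nonneg hP.le _) (pow_nonneg (inv_nonneg.mpr hP.le) _)
    exact mul_le_mul_of_nonneg_left (hCψ i hi _) h0
  have hΨa : ∀ i : ℕ, iteratedDeriv i Ψ a = 0 := by
    intro i
    have hpa : P⁻¹ * a = 1/2 := by rw [haP]; field_simp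
    have := hΨfor i a
    rw [hpa, hvanl i, norm_zero, mul_zero] at this
    exact norm_eq_zero.mp this
  have hΨb : ∀ i : ℕ, iteratedDeriv i Ψ b = 0 := by
    intro i
    have hpb : P⁻¹ * b = 2 := by rw [hbP]; field_simp
    have := hΨfor i b
    rw [hpb, hvanr i, norm_zero, mul_zero] at this
    exact norm_eq_zero.mp this
  have hamem : a ∈ S := Set.left_mem_Icc.mpr hab.le
  have hbmem : b ∈ S := Set.right_mem_Icc.mpr hab.le
  -- boundary vanishing for g
  have hgkey : ∀ y ∈ S, (∀ i : ℕ, iteratedDeriv i Ψ y = 0) →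
      ∀ j : ℕ, j ≤ N → iteratedDerivWithin j g S y = 0 := by
    intro y hy h0 j hj
    have hL := norm_iteratedFDerivWithin_mul_le (𝕜 := ℝ) hΨCD hA' hUD hy
      (n := j) (by exact_mod_cast hj)
    have hz : ∀ i ∈ Finset.range (j+1),
        (j.choose i : ℝ) * ‖iteratedFDerivWithin ℝ i Ψ S y‖ *
          ‖iteratedFDerivWithin ℝ (j-i) A S y‖ = 0 := by
      intro i _
      rw [norm_iteratedFDerivWithin_eq_norm_iteratedDerivWithin, itdw_eq_itd hΨ hUD hy i,
        h0 i, norm_zero, mul_zero, zero_mul]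
    rw [Finset.sum_eq_zero hz] at hL
    have : ‖iteratedDerivWithin j g S y‖ ≤ 0 := by
      rw [← norm_iteratedFDerivWithin_eq_norm_iteratedDerivWithin]
      exact hL
    exact norm_eq_zero.mp (le_antisymm this (norm_nonneg _))
  have hgbd : ∀ j : ℕ, j < N →
      iteratedDerivWithin j g S a = 0 ∧ iteratedDerivWithin j g S b = 0 :=
    fun j hj => ⟨hgkey a hamem hΨa j hj.le, hgkey b hbmem hΨb j hj.le⟩
  -- pointwise derivative bounds for g
  have hPR : (0:ℝ) < 1 + P*R := by nlinarith [mul_nonneg hP.le hR]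
  have hWpos : (0:ℝ) < (1 + P*R) ^ (-((n:ℝ)-1)/2) := Real.rpow_pos_of_pos hPR _
  have hW0 : (0:ℝ) ≤ (1 + P*R) ^ (-((n:ℝ)-1)/2) := hWpos.le
  have hq2 : (0:ℝ) < (2:ℝ)^q := Real.rpow_pos_of_pos (by norm_num) q
  have hPp : ∀ m : ℕ, (0:ℝ) ≤ P ^ m := fun m => pow_nonneg hP.le m
  have hPi : ∀ m : ℕ, (0:ℝ) ≤ (P⁻¹) ^ m := fun m => pow_nonneg (inv_nonneg.mpr hP.le) m
  have hxlow : ∀ α : ℕ, α ≤ N → ∀ x ∈ S, x ^ (-(α:ℝ)) ≤ 2^N * (P⁻¹)^α := by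
    intro α hα x hx
    have hx0 : 0 < x := lt_of_lt_of_le ha hx.1
    rw [Real.rpow_neg hx0.le, Real.rpow_natCast]
    have h1 : (P/2)^α ≤ x^α := by
      apply pow_le_pow_left₀ (by linarith)
      rw [← haP]; exact hx.1
    have h2 : (x^α)⁻¹ ≤ ((P/2)^α)⁻¹ := by
      apply inv_anti₀ (pow_pos (by linarith) α) h1
    have h3 : ((P/2)^α)⁻¹ = 2^α * (P⁻¹)^α := by
      rw [← inv_pow, inv_div, div_eq_mul_inv, mul_pow, mul_comm]
    calc (x^α)⁻¹ ≤ ((P/2)^α)⁻¹ := h2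
      _ = 2^α * (P⁻¹)^α := h3
      _ ≤ 2^N * (P⁻¹)^α := by
          apply mul_le_mul_of_nonneg_right _ (pow_nonneg (inv_nonneg.mpr hP.le) α)
          exact pow_le_pow_right₀ (by norm_num) hα
  have hrfac : ∀ x ∈ S, (1+x*R) ^ (-((n:ℝ)-1)/2)
      ≤ (2:ℝ)^q * (1+P*R) ^ (-((n:ℝ)-1)/2) := by
    intro x hx
    have hE : -((n:ℝ)-1)/2 = -q := by rw [hq]; ring
    have hxlow2 : P/2 ≤ x := by rw [← haP]; exact hx.1
    have h1 : (0:ℝ) < 1 + P*R := hPR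
    have h2 : 1 + P*R ≤ 2*(1+x*R) := by
      nlinarith [mul_nonneg (by linarith : (0:ℝ) ≤ 2*x - P) hR]
    have h3 : (2*(1+x*R)) ^ (-((n:ℝ)-1)/2) ≤ (1+P*R) ^ (-((n:ℝ)-1)/2) := by
      apply Real.rpow_le_rpow_of_nonpos h1 h2
      rw [hE]; linarith
    have h4 : (2*(1+x*R)) ^ (-((n:ℝ)-1)/2)
        = (2:ℝ) ^ (-((n:ℝ)-1)/2) * (1+x*R) ^ (-((n:ℝ)-1)/2) := by
      apply Real.mul_rpow (by norm_num)
      have hx0 : 0 < x := lt_of_lt_of_le ha hx.1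
      nlinarith [mul_nonneg hx0.le hR]
    have h5 : (0:ℝ) < (2:ℝ)^q := Real.rpow_pos_of_pos (by norm_num) q
    calc (1+x*R) ^ (-((n:ℝ)-1)/2)
        = (2:ℝ)^q * ((2:ℝ) ^ (-((n:ℝ)-1)/2) * (1+x*R) ^ (-((n:ℝ)-1)/2)) := by
          rw [← mul_assoc, ← Real.rpow_add (by norm_num : (0:ℝ) < 2),
            (by rw [hE]; ring : q + -((n:ℝ)-1)/2 = 0), Real.rpow_zero, one_mul]
      _ = (2:ℝ)^q * (2*(1+x*R)) ^ (-((n:ℝ)-1)/2) := by rw [h4]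
      _ ≤ (2:ℝ)^q * (1+P*R) ^ (-((n:ℝ)-1)/2) := mul_le_mul_of_nonneg_left h3 h5.le
  have hgB : ∀ j : ℕ, j ≤ N → ∀ x ∈ S,
      ‖iteratedDerivWithin j g S x‖
        ≤ K * M * P ^ (n-1) * (P⁻¹) ^ j * (1 + P*R) ^ (-((n:ℝ)-1)/2) := by
    intro j hj x hx
    have hL := norm_iteratedFDerivWithin_mul_le (𝕜 := ℝ) hΨCD hA' hUD hx
      (n := j) (by exact_mod_cast hj)
    have hterm : ∀ i ∈ Finset.range (j+1),
        (j.choose i : ℝ) * ‖iteratedFDerivWithin ℝ i Ψ S x‖ *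
          ‖iteratedFDerivWithin ℝ (j-i) A S x‖
        ≤ (j.choose i : ℝ) * (Cψ * 2^N * (2:ℝ)^q * M * P^(n-1) * (P⁻¹)^j
            * (1 + P*R) ^ (-((n:ℝ)-1)/2)) := by
      intro i hi
      have hij : i ≤ j := Nat.lt_succ_iff.mp (Finset.mem_range.mp hi)
      have hΨi : ‖iteratedFDerivWithin ℝ i Ψ S x‖ ≤ P^(n-1) * (P⁻¹)^i * Cψ := by
        rw [norm_iteratedFDerivWithin_eq_norm_iteratedDerivWithin, itdw_eq_itd hΨ hUD hx i]
        exact hΨbd i (hij.trans hj) x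
      have hAi : ‖iteratedFDerivWithin ℝ (j-i) A S x‖
          ≤ M * (2^N * (P⁻¹)^(j-i)) * ((2:ℝ)^q * (1+P*R) ^ (-((n:ℝ)-1)/2)) := by
        rw [norm_iteratedFDerivWithin_eq_norm_iteratedDerivWithin]
        refine le_trans (hAb (j-i) (le_trans (Nat.sub_le j i) hj) x hx) ?_
        have hx0 : 0 < x := lt_of_lt_of_le ha hx.1
        apply mul_le_mul
        · exact mul_le_mul_of_nonneg_left (hxlow (j-i) (le_trans (Nat.sub_le j i) hj) x hx) hM.le
        · exact hrfac x hx
        · exact Real.rpow_nonneg (by nlinarith [mul_nonneg hx0.le hR]) _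
        · exact mul_nonneg hM.le (mul_nonneg (by positivity) (hPi _))
      calc (j.choose i : ℝ) * ‖iteratedFDerivWithin ℝ i Ψ S x‖ *
            ‖iteratedFDerivWithin ℝ (j-i) A S x‖
          ≤ (j.choose i : ℝ) * (P^(n-1) * (P⁻¹)^i * Cψ)
              * (M * (2^N * (P⁻¹)^(j-i)) * ((2:ℝ)^q * (1+P*R) ^ (-((n:ℝ)-1)/2))) := by
            apply mul_le_mul
            · exact mul_le_mul_of_nonneg_left hΨi (by positivity)
            · exact hAi
            · exact norm_nonneg _
            · exact mul_nonneg (by positivity)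
                (mul_nonneg (mul_nonneg (hPp _) (hPi _)) hCψ0)
        _ = (j.choose i : ℝ) * (Cψ * 2^N * (2:ℝ)^q * M * P^(n-1) * ((P⁻¹)^i * (P⁻¹)^(j-i))
              * (1 + P*R) ^ (-((n:ℝ)-1)/2)) := by ring
        _ = (j.choose i : ℝ) * (Cψ * 2^N * (2:ℝ)^q * M * P^(n-1) * (P⁻¹)^j
              * (1 + P*R) ^ (-((n:ℝ)-1)/2)) := by
            rw [← pow_add, Nat.add_sub_cancel' hij]
    have hsum : ∑ i ∈ Finset.range (j+1), (j.choose i : ℝ)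
        * (Cψ * 2^N * (2:ℝ)^q * M * P^(n-1) * (P⁻¹)^j * (1 + P*R) ^ (-((n:ℝ)-1)/2))
        = 2^j * (Cψ * 2^N * (2:ℝ)^q * M * P^(n-1) * (P⁻¹)^j
            * (1 + P*R) ^ (-((n:ℝ)-1)/2)) := by
      rw [← Finset.sum_mul, ← Nat.cast_sum, Nat.sum_range_choose]
      push_cast; ring
    have h2j : (2:ℝ)^j ≤ 2^N := pow_le_pow_right₀ (by norm_num) hj
    have hZ0 : (0:ℝ) ≤ (2:ℝ)^N * ((2:ℝ)^N * ((2:ℝ)^q * (M * (P^(n-1) * ((P⁻¹)^j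
        * (1 + P*R) ^ (-((n:ℝ)-1)/2)))))) :=
      mul_nonneg (by positivity) (mul_nonneg (by positivity) (mul_nonneg hq2.le
        (mul_nonneg hM.le (mul_nonneg (hPp _) (mul_nonneg (hPi _) hW0)))))
    have hTnn : (0:ℝ) ≤ Cψ * 2^N * (2:ℝ)^q * M * P^(n-1) * (P⁻¹)^j
        * (1 + P*R) ^ (-((n:ℝ)-1)/2) :=
      mul_nonneg (mul_nonneg (mul_nonneg (mul_nonneg (mul_nonneg
        (mul_nonneg hCψ0 (by positivity)) hq2.le) hM.le) (hPp _)) (hPi _)) hW0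
    calc ‖iteratedDerivWithin j g S x‖
        = ‖iteratedFDerivWithin ℝ j g S x‖ :=
          (norm_iteratedFDerivWithin_eq_norm_iteratedDerivWithin).symm
      _ ≤ ∑ i ∈ Finset.range (j+1), (j.choose i : ℝ) * ‖iteratedFDerivWithin ℝ i Ψ S x‖ *
            ‖iteratedFDerivWithin ℝ (j-i) A S x‖ := hL
      _ ≤ ∑ i ∈ Finset.range (j+1), (j.choose i : ℝ)
            * (Cψ * 2^N * (2:ℝ)^q * M * P^(n-1) * (P⁻¹)^j
              * (1 + P*R) ^ (-((n:ℝ)-1)/2)) := Finset.sum_le_sum hterm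
      _ = 2^j * (Cψ * 2^N * (2:ℝ)^q * M * P^(n-1) * (P⁻¹)^j
            * (1 + P*R) ^ (-((n:ℝ)-1)/2)) := hsum
      _ ≤ 2^N * (Cψ * 2^N * (2:ℝ)^q * M * P^(n-1) * (P⁻¹)^j
            * (1 + P*R) ^ (-((n:ℝ)-1)/2)) := by
          apply mul_le_mul_of_nonneg_right h2j hTnn
      _ ≤ K * M * P ^ (n-1) * (P⁻¹) ^ j * (1 + P*R) ^ (-((n:ℝ)-1)/2) := by
          rw [hK]
          have hC1 : Cψ ≤ Cψ + 1 := by linarith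
          calc (2:ℝ)^N * (Cψ * 2^N * (2:ℝ)^q * M * P^(n-1) * (P⁻¹)^j
                * (1 + P*R) ^ (-((n:ℝ)-1)/2))
              = Cψ * ((2:ℝ)^N * ((2:ℝ)^N * ((2:ℝ)^q * (M * (P^(n-1) * ((P⁻¹)^j
                  * (1 + P*R) ^ (-((n:ℝ)-1)/2))))))) := by ring
            _ ≤ (Cψ + 1) * ((2:ℝ)^N * ((2:ℝ)^N * ((2:ℝ)^q * (M * (P^(n-1) * ((P⁻¹)^j
                  * (1 + P*R) ^ (-((n:ℝ)-1)/2))))))) :=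
                mul_le_mul_of_nonneg_right hC1 hZ0
            _ = (Cψ + 1) * 2^N * 2^N * (2:ℝ)^q * M * P^(n-1) * (P⁻¹)^j
                  * (1 + P*R) ^ (-((n:ℝ)-1)/2) := by ring
  -- rewrite the integral
  have hphase : ∀ x : ℝ,
      Complex.exp (Complex.I * (t:ℂ) * (x:ℂ)) * Complex.exp (Complex.I * (ε:ℂ) * (x:ℂ) * (R:ℂ))
        = Complex.exp (Complex.I * (s:ℝ) * (x:ℂ)) := by
    intro x; rw [← Complex.exp_add]; congr 1; rw [hsdef]; push_cast; ring
  have hΨx : ∀ x : ℝ, (φ ((2:ℝ)^(-k) * x) : ℂ) * (x:ℂ)^(n-1) = Ψ x := by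
    intro x
    have hk2 : (2:ℝ)^(-k) = P⁻¹ := by rw [hPdef, zpow_neg]
    simp only [hk2, hΨdef, hψdef]
    push_cast
    rw [mul_pow]
    have hPC : ((P:ℝ):ℂ) ≠ 0 := by exact_mod_cast hP.ne'
    field_simp
    rw [mul_assoc, ← mul_pow, mul_one_div_cancel hPC, one_pow, mul_one]
  have hint : ∀ x : ℝ,
      Complex.exp (Complex.I * (t:ℂ) * (x:ℂ)) * Complex.exp (Complex.I * (ε:ℂ) * (x:ℂ) * (R:ℂ))
        * (φ ((2:ℝ)^(-k) * x)) * A x * (x:ℂ)^(n-1)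
      = Complex.exp (Complex.I * (s:ℝ) * (x:ℂ)) * g x := by
    intro x
    simp only [hgdef]
    rw [← hΨx x, ← hphase x]; ring
  have hg0 : ∀ x : ℝ, x ∉ S → g x = 0 := by
    intro x hxS
    have hnot : P⁻¹ * x ∉ Set.Icc (1/2:ℝ) 2 := by
      intro hmem
      apply hxS
      obtain ⟨h1, h2⟩ := hmem
      constructor
      · have h3 := mul_le_mul_of_nonneg_left h1 hP.le
        rw [← mul_assoc, mul_inv_cancel₀ hP.ne', one_mul] at h3
        rw [haP]; linarith
      · have h3 := mul_le_mul_of_nonneg_left h2 hP.le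
        rw [← mul_assoc, mul_inv_cancel₀ hP.ne', one_mul] at h3
        rw [hbP]; linarith
    have hz := hψzero _ hnot
    simp only [hgdef, hΨdef]
    rw [hz]; ring
  have hred : (∫ x in Set.Ioi (0:ℝ),
        Complex.exp (Complex.I * (t:ℂ) * (x:ℂ)) *
          Complex.exp (Complex.I * (ε:ℂ) * (x:ℂ) * (R:ℂ)) *
          (φ ((2:ℝ)^(-k) * x)) * A x * (x:ℂ)^(n-1))
      = ∫ x in a..b, Complex.exp (Complex.I * (s:ℝ) * (x:ℂ)) * g x := by
    have hfun : (fun x : ℝ => Complex.exp (Complex.I * (t:ℂ) * (x:ℂ)) *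
          Complex.exp (Complex.I * (ε:ℂ) * (x:ℂ) * (R:ℂ)) *
          (φ ((2:ℝ)^(-k) * x)) * A x * (x:ℂ)^(n-1))
        = fun x : ℝ => Complex.exp (Complex.I * (s:ℝ) * (x:ℂ)) * g x := funext hint
    rw [hfun]
    have h1 : ∀ x : ℝ, x ∉ S → Complex.exp (Complex.I * (s:ℝ) * (x:ℂ)) * g x = 0 :=
      fun x hx => by rw [hg0 x hx, mul_zero]
    have e1 : (∫ x in Set.Ioi (0:ℝ), Complex.exp (Complex.I * (s:ℝ) * (x:ℂ)) * g x)
        = ∫ x : ℝ, Complex.exp (Complex.I * (s:ℝ) * (x:ℂ)) * g x :=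
      setIntegral_eq_integral_of_forall_compl_eq_zero
        (fun x hx => h1 x (fun hxS => hx (lt_of_lt_of_le ha hxS.1)))
    have e2 : (∫ x in S, Complex.exp (Complex.I * (s:ℝ) * (x:ℂ)) * g x)
        = ∫ x : ℝ, Complex.exp (Complex.I * (s:ℝ) * (x:ℂ)) * g x :=
      setIntegral_eq_integral_of_forall_compl_eq_zero (fun x hx => h1 x hx)
    rw [e1, ← e2, hSdef, integral_Icc_eq_integral_Ioc,
      ← intervalIntegral.integral_of_le hab.le]
  rw [hred]
  -- final numerics
  have hPn : P^(n-1) * P = P^n := by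
    rw [← pow_succ]; congr 1; omega
  have h2kn : (2:ℝ)^(k*(n:ℤ)) = P^n := by rw [hPdef, zpow_mul, zpow_natCast]
  have hba2 : b - a ≤ 2*P := by rw [haP, hbP]; linarith
  rcases le_or_gt (P * |s|) 1 with hsmall | hbig
  · -- small frequency case
    have hB0 : ∀ x ∈ S, ‖iteratedDerivWithin 0 g S x‖
        ≤ K * M * P ^ (n-1) * (1 + P*R) ^ (-((n:ℝ)-1)/2) := by
      intro x hx
      have := hgB 0 (Nat.zero_le N) x hx
      simpa using this
    have h0 := ibp_bound hab s 0 g (hgCD.of_le (by exact_mod_cast Nat.zero_le N))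
      (fun j hj => absurd hj (Nat.not_lt_zero j)) hB0 (Or.inr rfl)
    simp only [pow_zero, one_mul] at h0
    have hPs0 : (0:ℝ) ≤ P * |s| := mul_nonneg hP.le (abs_nonneg s)
    have hr1 : ((2:ℝ))^(-(N:ℝ)) ≤ (1+P*|s|)^(-(N:ℝ)) := by
      apply Real.rpow_le_rpow_of_nonpos (by linarith) (by linarith)
      simp
    calc ‖∫ x in a..b, Complex.exp (Complex.I * (s:ℝ) * (x:ℂ)) * g x‖
        ≤ K * M * P ^ (n-1) * (1 + P*R) ^ (-((n:ℝ)-1)/2) * (b - a) := h0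
      _ ≤ K * M * P ^ (n-1) * (1 + P*R) ^ (-((n:ℝ)-1)/2) * (2*P) := by
          apply mul_le_mul_of_nonneg_left hba2
            (mul_nonneg (mul_nonneg (mul_nonneg hKpos.le hM.le) (hPp _)) hW0)
      _ = (K * 2^(N+1) * M * P^n * (1 + P*R) ^ (-((n:ℝ)-1)/2)) * ((2:ℝ))^(-(N:ℝ)) := by
          have h2N : ((2:ℝ))^(N+1) * ((2:ℝ))^(-(N:ℝ)) = 2 := by
            rw [← Real.rpow_natCast 2 (N+1), ← Real.rpow_add (by norm_num)]
            rw [show ((N+1:ℕ):ℝ) + (-(N:ℝ)) = 1 by push_cast; ring, Real.rpow_one]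
          calc K * M * P ^ (n-1) * (1 + P*R) ^ (-((n:ℝ)-1)/2) * (2*P)
              = K * M * (P^(n-1) * P) * (1 + P*R) ^ (-((n:ℝ)-1)/2)
                  * ((2:ℝ)^(N+1) * ((2:ℝ))^(-(N:ℝ))) := by rw [h2N]; ring
            _ = (K * 2^(N+1) * M * P^n * (1 + P*R) ^ (-((n:ℝ)-1)/2)) * ((2:ℝ))^(-(N:ℝ)) := by
                rw [hPn]; ring
      _ ≤ (K * 2^(N+1) * M * P^n * (1 + P*R) ^ (-((n:ℝ)-1)/2)) * (1+P*|s|)^(-(N:ℝ)) := by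
          apply mul_le_mul_of_nonneg_left hr1
            (mul_nonneg (mul_nonneg (mul_nonneg (mul_nonneg hKpos.le (by positivity)) hM.le)
              (hPp _)) hW0)
      _ = K * 2^(N+1) * M * (2:ℝ)^(k*(n:ℤ)) * (1+P*|s|)^(-(N:ℝ))
            * (1 + P*R) ^ (-((n:ℝ)-1)/2) := by rw [h2kn]; ring
  · -- large frequency case
    have hs0 : s ≠ 0 := by
      intro h
      rw [h, abs_zero, mul_zero] at hbig
      linarith
    have hspos : 0 < |s| := abs_pos.mpr hs0
    have hBN : ∀ x ∈ S, ‖iteratedDerivWithin N g S x‖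
        ≤ K * M * P ^ (n-1) * (P⁻¹)^N * (1 + P*R) ^ (-((n:ℝ)-1)/2) :=
      fun x hx => hgB N le_rfl x hx
    have h0 := ibp_bound hab s N g hgCD hgbd hBN (Or.inl hs0)
    have hkey : |s|⁻¹^N * (P⁻¹)^N ≤ 2^N * ((1+P*|s|)^N)⁻¹ := by
      have hPs1 : (0:ℝ) < P * |s| := lt_trans one_pos hbig
      have e1 : (1+P*|s|)^N ≤ (2*(P*|s|))^N := by
        apply pow_le_pow_left₀ (by linarith) (by linarith)
      have e2 : |s|⁻¹^N * (P⁻¹)^N = ((P*|s|)^N)⁻¹ := by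
        have h5 : |s|⁻¹ * P⁻¹ = (P*|s|)⁻¹ := by rw [mul_inv]; ring
        rw [← mul_pow, h5, inv_pow]
      have e3 : ((P*|s|)^N)⁻¹ = 2^N * (((2*(P*|s|))^N)⁻¹) := by
        rw [show (2*(P*|s|))^N = 2^N * (P*|s|)^N from mul_pow 2 (P*|s|) N, mul_inv,
          ← mul_assoc, mul_inv_cancel₀ (by positivity : ((2:ℝ)^N) ≠ 0), one_mul]
      have e4 : ((2*(P*|s|))^N)⁻¹ ≤ ((1+P*|s|)^N)⁻¹ :=
        inv_anti₀ (pow_pos (by linarith) N) e1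
      rw [e2, e3]
      exact mul_le_mul_of_nonneg_left e4 (by positivity)
    have hrN : (1+P*|s|)^(-(N:ℝ)) = ((1+P*|s|)^N)⁻¹ := by
      have hPs1 : (0:ℝ) < P * |s| := lt_trans one_pos hbig
      rw [Real.rpow_neg (by linarith), Real.rpow_natCast]
    calc ‖∫ x in a..b, Complex.exp (Complex.I * (s:ℝ) * (x:ℂ)) * g x‖
        ≤ |s|⁻¹^N * (K * M * P ^ (n-1) * (P⁻¹)^N * (1 + P*R) ^ (-((n:ℝ)-1)/2) * (b-a)) := h0
      _ ≤ |s|⁻¹^N * (K * M * P ^ (n-1) * (P⁻¹)^N * (1 + P*R) ^ (-((n:ℝ)-1)/2) * (2*P)) := by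
          apply mul_le_mul_of_nonneg_left
            (mul_le_mul_of_nonneg_left hba2
              (mul_nonneg (mul_nonneg (mul_nonneg (mul_nonneg hKpos.le hM.le) (hPp _))
                (hPi _)) hW0))
            (pow_nonneg (inv_nonneg.mpr (abs_nonneg s)) N)
      _ = (2 * K * M * (P^(n-1) * P) * (1 + P*R) ^ (-((n:ℝ)-1)/2)) * (|s|⁻¹^N * (P⁻¹)^N) := by
          ring
      _ ≤ (2 * K * M * (P^(n-1) * P) * (1 + P*R) ^ (-((n:ℝ)-1)/2))
            * (2^N * ((1+P*|s|)^N)⁻¹) := by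
          apply mul_le_mul_of_nonneg_left hkey
            (mul_nonneg (mul_nonneg (mul_nonneg (mul_nonneg (by norm_num) hKpos.le) hM.le)
              (mul_nonneg (hPp _) hP.le)) hW0)
      _ = K * 2^(N+1) * M * (2:ℝ)^(k*(n:ℤ)) * (1+P*|s|)^(-(N:ℝ))
            * (1 + P*R) ^ (-((n:ℝ)-1)/2) := by
          rw [h2kn, hrN, ← hPn]; ring
end
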